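/- arXiv:2210.14595 — 5 statements merged into one kernel-verified Lean document; each statement's English description precedes it below -/
import Mathlib

section
/- Let $0<\beta\le 1/2$ and $\alpha>1$ be real numbers. Then $\sum_{i=0}^{\infty} \beta^{\alpha^i} \le \frac{2\beta}{\min\{\alpha-1,\,1\}}$. -/
/-- For `0 < β ≤ 1/2` and `α > 1`, `∑_{i=0}^∞ β^(α^i) ≤ 2β / min (α-1) 1`. -/
theorem stmt_0 (α β : ℝ) (hβ0 : 0 < β) (hβ : β ≤ 1 / 2) (hα : 1 < α) :
    ∑' i : ℕ, β ^ (α ^ i) ≤ 2 * β / min (α - 1) 1 := by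
  set c : ℝ := min (α - 1) 1 with hc
  have hc0 : 0 < c := lt_min (by linarith) one_pos
  have hc1 : c ≤ 1 := min_le_right _ _
  have hcα : 1 + c ≤ α := by
    have := min_le_left (α - 1) 1
    linarith
  have hβ1 : β < 1 := by linarith
  have hhalf : β ^ c ≤ 1 - c / 2 := by
    have h1 : β ^ c ≤ (1/2 : ℝ) ^ c :=
      Real.rpow_le_rpow (le_of_lt hβ0) hβ hc0.le
    have h2 : (1/2 : ℝ) ^ c ≤ 1 - c / 2 := by
      have hconv := convexOn_exp.2 (Set.mem_univ (0:ℝ))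
        (Set.mem_univ (Real.log (1/2))) (by linarith : (0:ℝ) ≤ 1 - c) hc0.le (by ring)
      rw [Real.rpow_def_of_pos (by norm_num)]
      simp only [smul_eq_mul, mul_zero, zero_add, Real.exp_zero] at hconv
      rw [Real.exp_log (by norm_num : (0:ℝ) < 1/2)] at hconv
      calc Real.exp (Real.log (1/2) * c) = Real.exp (c * Real.log (1/2)) := by ring_nf
        _ ≤ (1 - c) * 1 + c * (1/2) := hconv
        _ = 1 - c / 2 := by ring
    linarith
  have hβc1 : β ^ c < 1 := by linarith
  have hβc0 : 0 ≤ β ^ c := Real.rpow_nonneg hβ0.le _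
  have hpt : ∀ i : ℕ, β ^ (α ^ i) ≤ β * (β ^ c) ^ i := by
    intro i
    have hexp : 1 + (i : ℝ) * c ≤ α ^ i := by
      calc (1 : ℝ) + i * c ≤ (1 + c) ^ i := one_add_mul_le_pow (by linarith) i
        _ ≤ α ^ i := pow_le_pow_left₀ (by linarith) hcα i
    have h := Real.rpow_le_rpow_of_exponent_ge hβ0 hβ1.le hexp
    calc β ^ (α ^ i) ≤ β ^ (1 + (i:ℝ) * c) := h
      _ = β * (β ^ c) ^ i := by
        rw [Real.rpow_add hβ0, Real.rpow_one, mul_comm (i:ℝ) c,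
          Real.rpow_mul hβ0.le, Real.rpow_natCast]
  have hsum : Summable (fun i : ℕ => β * (β ^ c) ^ i) :=
    (summable_geometric_of_lt_one hβc0 hβc1).mul_left β
  have hsum' : Summable (fun i : ℕ => β ^ (α ^ i)) :=
    Summable.of_nonneg_of_le (fun i => Real.rpow_nonneg hβ0.le _) hpt hsum
  have hinv : (1 - β ^ c)⁻¹ ≤ 2 / c := by
    have h1 : c / 2 ≤ 1 - β ^ c := by linarith
    have h2 : (0:ℝ) < c / 2 := by linarith
    calc (1 - β ^ c)⁻¹ ≤ (c / 2)⁻¹ := by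
          apply inv_anti₀ h2 h1
      _ = 2 / c := by rw [inv_div]
  calc ∑' i : ℕ, β ^ (α ^ i) ≤ ∑' i : ℕ, β * (β ^ c) ^ i := Summable.tsum_le_tsum hpt hsum' hsum
    _ = β * (1 - β ^ c)⁻¹ := by
        rw [tsum_mul_left, tsum_geometric_of_lt_one hβc0 hβc1]
    _ ≤ β * (2 / c) := by
        exact mul_le_mul_of_nonneg_left hinv hβ0.le
    _ = 2 * β / c := by ring
end

section
/- Let $\{X_i\}_{i\ge 0}$ be real-valued random variables on a common probability space satisfying $\mathbb{P}(X_i \ge a) \le C_1 \exp(-C_2 a^2)$ for all $i$ and all $a>0$, where $C_1, C_2 > 0$. Fix $0<\varrho<1$ and define $S_k = \sum_{i=0}^{k} \varrho^{k-i} X_i$. Then for every $a \ge 2 C_2^{-1/2}(1-\varrho^{1/2})^{-1}$ it holds that $\mathbb{P}(S_k \ge a) \le \tilde{C}_1 \exp(-\tilde{C}_2 a^2)$, where $\tilde{C}_1 = 2C_1 / \min\{\varrho^{-1}-1, 1\}$ and $\tilde{C}_2 = (1-\varrho^{1/2})^2 C_2$. -/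
/-!
Put `σ = √ϱ`. The thresholds `b_j = (1 - σ) a σ^{-j}` satisfy `∑_{j ≤ k} ϱ^j b_j = a (1 - σ^{k+1}) ≤ a`,
so `S_k ≥ a` forces `X_{k-j} ≥ b_j` for some `j`, and a union bound gives
`P(S_k ≥ a) ≤ C₁ ∑_j exp(-c ϱ^{-j})` with `c = (1 - σ)² C₂ a²`. By Bernoulli's inequality
`ϱ^{-j} ≥ 1 + j (ϱ⁻¹ - 1)` this sum is dominated by a geometric series, and the lower bound on `a`,
which says exactly `c ≥ 4`, controls its ratio.
-/

open MeasureTheory Finset Real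

theorem measure_le_weighted_sum_le_sum_measure {ι Ω : Type*} [MeasurableSpace Ω] (μ : Measure Ω)
    {s : Finset ι} (hs : s.Nonempty) (X : ι → Ω → ℝ) {w b : ι → ℝ} (hw : ∀ i ∈ s, 0 < w i)
    {a : ℝ} (hba : ∑ i ∈ s, w i * b i ≤ a) :
    μ {ω | a ≤ ∑ i ∈ s, w i * X i ω} ≤ ∑ i ∈ s, μ {ω | b i ≤ X i ω} := by
  refine (measure_mono fun ω hω => ?_).trans (measure_biUnion_finset_le s _)
  obtain ⟨i, hi, hle⟩ := exists_le_of_sum_le hs (hba.trans hω)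
  exact Set.mem_biUnion hi ((mul_le_mul_iff_right₀ (hw i hi)).mp hle)

theorem sum_sq_pow_mul_geom_threshold_le {σ a : ℝ} (hσ : 0 < σ) (ha : 0 ≤ a) (k : ℕ) :
    ∑ i ∈ range (k + 1), (σ ^ 2) ^ (k - i) * ((1 - σ) * a / σ ^ (k - i)) ≤ a := by
  have hterm : ∀ j : ℕ, (σ ^ 2) ^ j * ((1 - σ) * a / σ ^ j) = a * ((1 - σ) * σ ^ j) := by
    intro j
    field_simp
    ring
  calc ∑ i ∈ range (k + 1), (σ ^ 2) ^ (k - i) * ((1 - σ) * a / σ ^ (k - i))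
      = a * ((1 - σ) * ∑ j ∈ range (k + 1), σ ^ j) := by
        simp_rw [hterm, sum_flip (fun j => a * ((1 - σ) * σ ^ j)), mul_sum]
    _ = a * (1 - σ ^ (k + 1)) := by rw [mul_neg_geom_sum]
    _ ≤ a := by nlinarith [pow_pos hσ (k + 1)]

theorem four_le_sq_mul_mul_sq {C t a : ℝ} (hC : 0 < C) (ht : 0 < t)
    (h : 2 * C ^ (-(1 : ℝ) / 2) * t⁻¹ ≤ a) : 4 ≤ t ^ 2 * C * a ^ 2 := by
  rw [neg_div, rpow_neg hC.le, ← sqrt_eq_rpow, ← div_eq_mul_inv, div_le_iff₀ ht,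
    ← div_eq_mul_inv, div_le_iff₀ (sqrt_pos.2 hC)] at h
  have hsq : (a * t * √C) ^ 2 = t ^ 2 * C * a ^ 2 := by
    rw [mul_pow, mul_pow, sq_sqrt hC.le]
    ring
  nlinarith

theorem exp_neg_mul_inv_pow_le {ϱ c : ℝ} (hϱ : 0 < ϱ) (hc : 0 ≤ c) (j : ℕ) :
    exp (-c * (ϱ ^ j)⁻¹) ≤ exp (-c) * exp (-c * (ϱ⁻¹ - 1)) ^ j := by
  have hbernoulli : 1 + j * (ϱ⁻¹ - 1) ≤ (ϱ ^ j)⁻¹ := by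
    simpa [inv_pow] using one_add_mul_le_pow (a := ϱ⁻¹ - 1) (by linarith [inv_pos.2 hϱ]) j
  rw [← exp_nat_mul, ← exp_add]
  exact exp_le_exp.2 (by nlinarith [mul_le_mul_of_nonneg_left hbernoulli hc])

theorem inv_one_sub_exp_neg_le {x : ℝ} (hx : 0 < x) : (1 - exp (-x))⁻¹ ≤ 1 + x⁻¹ := by
  have hexp : (1 + x) * exp (-x) ≤ 1 := by
    rw [exp_neg, ← div_eq_mul_inv, div_le_one (exp_pos x)]
    linarith [add_one_le_exp x]
  have hpos : 0 < 1 - exp (-x) := by nlinarith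
  rw [inv_le_iff_one_le_mul₀ hpos]
  have := mul_inv_cancel₀ hx.ne'
  nlinarith [inv_pos.2 hx]

theorem sum_range_exp_neg_mul_inv_pow_le {ϱ c : ℝ} (hϱ0 : 0 < ϱ) (hϱ1 : ϱ < 1) (hc : 4 ≤ c)
    (n : ℕ) : ∑ j ∈ range n, exp (-c * (ϱ ^ j)⁻¹) ≤ 2 / min (ϱ⁻¹ - 1) 1 * exp (-c) := by
  set m := ϱ⁻¹ - 1
  have hm : 0 < m := sub_pos.2 ((one_lt_inv₀ hϱ0).2 hϱ1)
  have hratio : exp (-c * m) < 1 := exp_lt_one_iff.2 (by nlinarith)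
  have hconst : 1 + (c * m)⁻¹ ≤ 2 / min m 1 := by
    have h4 : (c * m)⁻¹ ≤ (4 * m)⁻¹ := inv_anti₀ (by positivity) (by nlinarith)
    have h4m : (4 * m)⁻¹ * m = 1 / 4 := by field_simp
    rcases le_total m 1 with h | h
    · rw [min_eq_left h, le_div_iff₀ hm]
      nlinarith
    · rw [min_eq_right h]
      nlinarith [inv_anti₀ (by norm_num) (by linarith : (4 : ℝ) ≤ 4 * m)]
  calc ∑ j ∈ range n, exp (-c * (ϱ ^ j)⁻¹)
      ≤ ∑ j ∈ range n, exp (-c) * exp (-c * m) ^ j :=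
        sum_le_sum fun j _ => exp_neg_mul_inv_pow_le hϱ0 (by linarith) j
    _ = exp (-c) * ∑ j ∈ range n, exp (-c * m) ^ j := (mul_sum ..).symm
    _ ≤ exp (-c) * (1 - exp (-c * m))⁻¹ := by
        have hgeom := geom_sum_Ico_le_of_lt_one (m := 0) (n := n) (exp_pos (-c * m)).le hratio
        rw [range_eq_Ico, inv_eq_one_div]
        exact mul_le_mul_of_nonneg_left (by simpa using hgeom) (exp_pos _).le
    _ ≤ exp (-c) * (1 + (c * m)⁻¹) := by
        rw [neg_mul]
        exact mul_le_mul_of_nonneg_left (inv_one_sub_exp_neg_le (by positivity)) (exp_pos _).le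
    _ ≤ 2 / min m 1 * exp (-c) := by
        rw [mul_comm]
        gcongr

theorem stmt_2_general {Ω : Type*} [MeasurableSpace Ω] (μ : Measure Ω)
    (X : ℕ → Ω → ℝ) (C1 C2 : ℝ) (hC1 : 0 < C1) (hC2 : 0 < C2)
    (htail : ∀ i : ℕ, ∀ a : ℝ, 0 < a →
      μ {ω | a ≤ X i ω} ≤ ENNReal.ofReal (C1 * Real.exp (-C2 * a ^ 2)))
    (ϱ : ℝ) (hϱ0 : 0 < ϱ) (hϱ1 : ϱ < 1) (k : ℕ) (a : ℝ)
    (ha : 2 * C2 ^ (-(1 : ℝ) / 2) * (1 - ϱ ^ ((1 : ℝ) / 2))⁻¹ ≤ a) :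
    μ {ω | a ≤ ∑ i ∈ range (k + 1), ϱ ^ (k - i) * X i ω} ≤
      ENNReal.ofReal ((2 * C1 / min (ϱ⁻¹ - 1) 1) *
        Real.exp (-((1 - ϱ ^ ((1 : ℝ) / 2)) ^ 2 * C2) * a ^ 2)) := by
  set σ : ℝ := ϱ ^ ((1 : ℝ) / 2)
  have hσ0 : 0 < σ := rpow_pos_of_pos hϱ0 _
  have hσ1 : σ < 1 := rpow_lt_one hϱ0.le hϱ1 (by norm_num)
  have hσϱ : σ ^ 2 = ϱ := by
    rw [← rpow_natCast, ← rpow_mul hϱ0.le]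
    norm_num
  have ha0 : 0 < a := lt_of_lt_of_le (by positivity) ha
  set c := (1 - σ) ^ 2 * C2 * a ^ 2
  have hc : 4 ≤ c := four_le_sq_mul_mul_sq hC2 (sub_pos.2 hσ1) ha
  set b : ℕ → ℝ := fun i => (1 - σ) * a / σ ^ (k - i)
  have hexponent : ∀ i, -C2 * b i ^ 2 = -c * (ϱ ^ (k - i))⁻¹ := by
    intro i
    simp only [b, c, ← hσϱ, div_pow, ← pow_mul, mul_comm 2]
    ring
  calc μ {ω | a ≤ ∑ i ∈ range (k + 1), ϱ ^ (k - i) * X i ω}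
      ≤ ∑ i ∈ range (k + 1), μ {ω | b i ≤ X i ω} :=
        measure_le_weighted_sum_le_sum_measure μ nonempty_range_add_one X
          (fun i _ => pow_pos hϱ0 _) (hσϱ ▸ sum_sq_pow_mul_geom_threshold_le hσ0 ha0.le k)
    _ ≤ ∑ i ∈ range (k + 1), ENNReal.ofReal (C1 * exp (-C2 * b i ^ 2)) :=
        sum_le_sum fun i _ => htail i (b i) (by positivity)
    _ = ENNReal.ofReal (C1 * ∑ j ∈ range (k + 1), exp (-c * (ϱ ^ j)⁻¹)) := by
        rw [mul_sum, ENNReal.ofReal_sum_of_nonneg fun i _ => by positivity]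
        simp_rw [hexponent]
        exact sum_flip fun j => ENNReal.ofReal (C1 * exp (-c * (ϱ ^ j)⁻¹))
    _ ≤ _ := by
        refine ENNReal.ofReal_le_ofReal ?_
        rw [show -((1 - σ) ^ 2 * C2) * a ^ 2 = -c by ring]
        exact (mul_le_mul_of_nonneg_left (sum_range_exp_neg_mul_inv_pow_le hϱ0 hϱ1 hc _)
          hC1.le).trans_eq (by ring)

/-- Tail bound for an exponentially weighted sum of random variables with
Gaussian-like marginal tails, with no assumption on the joint distribution. -/
theorem stmt_2 {Ω : Type*} [MeasurableSpace Ω] (μ : Measure Ω) [IsProbabilityMeasure μ]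
    (X : ℕ → Ω → ℝ) (C1 C2 : ℝ) (hC1 : 0 < C1) (hC2 : 0 < C2)
    (htail : ∀ i : ℕ, ∀ a : ℝ, 0 < a →
      μ {ω | a ≤ X i ω} ≤ ENNReal.ofReal (C1 * Real.exp (-C2 * a ^ 2)))
    (ϱ : ℝ) (hϱ0 : 0 < ϱ) (hϱ1 : ϱ < 1) (k : ℕ) (a : ℝ)
    (ha : 2 * C2 ^ (-(1 : ℝ) / 2) * (1 - ϱ ^ ((1 : ℝ) / 2))⁻¹ ≤ a) :
    μ {ω | a ≤ ∑ i ∈ range (k + 1), ϱ ^ (k - i) * X i ω} ≤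
      ENNReal.ofReal ((2 * C1 / min (ϱ⁻¹ - 1) 1) *
        Real.exp (-((1 - ϱ ^ ((1 : ℝ) / 2)) ^ 2 * C2) * a ^ 2)) :=
  stmt_2_general μ X C1 C2 hC1 hC2 htail ϱ hϱ0 hϱ1 k a ha
end

section
/- Let $0 < \rho < 1$, set $\sigma = \rho^{1/4}$, and let $(Y_s)_{s \ge 0}$ be nonnegative random variables each satisfying $\mathbb{P}(Y_s \ge a) \le \mu/a^4$ for all $a > 0$, where $\mu \ge 0$. Define $T_j = \sum_{s=0}^{j-1} \rho^{(j-s-1)/2} Y_s$. Then for every $a > 0$, $\mathbb{P}(T_j \ge a) \le \frac{\mu}{(1-\rho^{1/4})^4 (1-\rho)\, a^4}$. -/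
/-!
With `σ = ρ^{1/4}`, split the level as `a ≥ ∑ₛ (1 - σ) σ^{j-s-1} a`. If the weighted sum
reaches `a`, some term `ρ^{(j-s-1)/2} Y_s = σ^{2(j-s-1)} Y_s` reaches its share, i.e.
`Y_s ≥ (1 - σ) a / σ^{j-s-1}`. By the union bound and the marginal tails the `s`-th event has
probability at most `m4 ρ^{j-s-1} / ((1 - σ)^4 a^4)`, and the geometric series in `ρ` is at
most `1 / (1 - ρ)`.
-/

open MeasureTheory Finset

section TailBounds

variable {Ω ι : Type*} [MeasurableSpace Ω] (μ : Measure Ω)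

theorem measure_le_sum_le_sum_measure_of_sum_le (s : Finset ι) (f : ι → Ω → ℝ)
    (b : ι → ℝ) {a : ℝ} (ha : 0 < a) (hb : ∑ i ∈ s, b i ≤ a) :
    μ {ω | a ≤ ∑ i ∈ s, f i ω} ≤ ∑ i ∈ s, μ {ω | b i ≤ f i ω} := by
  have hcover : {ω | a ≤ ∑ i ∈ s, f i ω} ⊆ ⋃ i ∈ s, {ω | b i ≤ f i ω} := by
    intro ω hω
    have hs : s.Nonempty := nonempty_of_sum_ne_zero (ha.trans_le hω).ne'
    obtain ⟨i, hi, hle⟩ := exists_le_of_sum_le hs (hb.trans hω)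
    exact Set.mem_biUnion hi hle
  exact (measure_mono hcover).trans (measure_biUnion_finset_le s _)

theorem measure_le_const_mul_le_of_tail {Y : Ω → ℝ} {m : ℝ} {p : ℕ}
    (htail : ∀ t : ℝ, 0 < t → μ {ω | t ≤ Y ω} ≤ ENNReal.ofReal (m / t ^ p))
    {c t : ℝ} (hc : 0 < c) (ht : 0 < t) :
    μ {ω | t ≤ c * Y ω} ≤ ENNReal.ofReal (m * c ^ p / t ^ p) := by
  have hset : {ω | t ≤ c * Y ω} = {ω | t / c ≤ Y ω} :=
    Set.ext fun _ => (div_le_iff₀' hc).symm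
  rw [hset, ← div_div_eq_mul_div, ← div_pow]
  exact htail _ (div_pos ht hc)

end TailBounds

theorem sum_range_pow_sub_sub_one_le_inv {x : ℝ} (hx0 : 0 ≤ x) (hx1 : x < 1) (j : ℕ) :
    ∑ s ∈ range j, x ^ (j - s - 1) ≤ (1 - x)⁻¹ := by
  simp_rw [Nat.sub_right_comm j _ 1]
  rw [sum_range_reflect (x ^ ·) j, ← Nat.Ico_zero_eq_range, ← one_div, ← pow_zero x]
  exact geom_sum_Ico_le_of_lt_one hx0 hx1

theorem stmt_15_general {Ω : Type*} [MeasurableSpace Ω] (μ : Measure Ω)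
    (ρ : ℝ) (hρ0 : 0 < ρ) (hρ1 : ρ < 1)
    (Y : ℕ → Ω → ℝ) (m4 : ℝ) (hm4 : 0 ≤ m4)
    (htail : ∀ s : ℕ, ∀ a : ℝ, 0 < a → μ {ω | a ≤ Y s ω} ≤ ENNReal.ofReal (m4 / a ^ 4))
    (j : ℕ) (a : ℝ) (ha : 0 < a) :
    μ {ω | a ≤ ∑ s ∈ range j, Real.sqrt ρ ^ (j - s - 1) * Y s ω} ≤
      ENNReal.ofReal (m4 / ((1 - ρ ^ ((1 : ℝ) / 4)) ^ 4 * (1 - ρ) * a ^ 4)) := by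
  set σ : ℝ := ρ ^ ((1 : ℝ) / 4) with hσ
  have hσ0 : 0 < σ := by positivity
  have hσ1 : 0 < 1 - σ := sub_pos.2 (Real.rpow_lt_one hρ0.le hρ1 (by norm_num))
  have hσ4 : σ ^ 4 = ρ := by rw [hσ, ← Real.rpow_natCast, ← Real.rpow_mul hρ0.le]; norm_num
  have hsqrt : Real.sqrt ρ = σ ^ 2 := by
    rw [← hσ4, show σ ^ 4 = (σ ^ 2) ^ 2 by ring, Real.sqrt_sq (by positivity)]
  set C : ℝ := m4 / ((1 - σ) ^ 4 * a ^ 4)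
  have hshares : ∑ s ∈ range j, (1 - σ) * a * σ ^ (j - s - 1) ≤ a := by
    rw [← mul_sum]
    calc (1 - σ) * a * ∑ s ∈ range j, σ ^ (j - s - 1) ≤ (1 - σ) * a * (1 - σ)⁻¹ := by
          gcongr; exact sum_range_pow_sub_sub_one_le_inv hσ0.le (sub_pos.1 hσ1) j
      _ = a := by field_simp
  calc μ {ω | a ≤ ∑ s ∈ range j, Real.sqrt ρ ^ (j - s - 1) * Y s ω}
      ≤ ∑ s ∈ range j,
          μ {ω | (1 - σ) * a * σ ^ (j - s - 1) ≤ Real.sqrt ρ ^ (j - s - 1) * Y s ω} :=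
        measure_le_sum_le_sum_measure_of_sum_le μ _ _ _ ha hshares
    _ ≤ ∑ s ∈ range j, ENNReal.ofReal (C * ρ ^ (j - s - 1)) := by
        refine sum_le_sum fun s _ => ?_
        refine (measure_le_const_mul_le_of_tail μ (htail s) (by positivity)
          (by positivity)).trans_eq ?_
        rw [hsqrt, ← hσ4]
        congr 1
        simp only [C]
        field_simp
        ring
    _ = ENNReal.ofReal (C * ∑ s ∈ range j, ρ ^ (j - s - 1)) := by
        rw [mul_sum, ENNReal.ofReal_sum_of_nonneg fun s _ => by positivity]
    _ ≤ ENNReal.ofReal (C * (1 - ρ)⁻¹) := by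
        gcongr; exact sum_range_pow_sub_sub_one_le_inv hρ0.le hρ1 j
    _ = ENNReal.ofReal (m4 / ((1 - σ) ^ 4 * (1 - ρ) * a ^ 4)) := by
        rw [← div_eq_mul_inv, div_div, mul_right_comm]

/-- Tail bound for an exponentially weighted sum of nonnegative random variables with
polynomial (Markov-type) marginal tails; no joint distribution assumption. -/
theorem stmt_15 {Ω : Type*} [MeasurableSpace Ω] (μ : Measure Ω) [IsProbabilityMeasure μ]
    (ρ : ℝ) (hρ0 : 0 < ρ) (hρ1 : ρ < 1)
    (Y : ℕ → Ω → ℝ) (hYnn : ∀ s ω, 0 ≤ Y s ω) (m4 : ℝ) (hm4 : 0 ≤ m4)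
    (htail : ∀ s : ℕ, ∀ a : ℝ, 0 < a → μ {ω | a ≤ Y s ω} ≤ ENNReal.ofReal (m4 / a ^ 4))
    (j : ℕ) (a : ℝ) (ha : 0 < a) :
    μ {ω | a ≤ ∑ s ∈ range j, Real.sqrt ρ ^ (j - s - 1) * Y s ω} ≤
      ENNReal.ofReal (m4 / ((1 - ρ ^ ((1 : ℝ) / 4)) ^ 4 * (1 - ρ) * a ^ 4)) :=
  stmt_15_general μ ρ hρ0 hρ1 Y m4 hm4 htail j a ha
end

section
/- Consider the switched closed-loop system $x_{k+1} = A x_k + B u_k + w_k$ with $x_0 = 0$, where at each step either $u_k = K_1 x_k$ or $u_k = K_0 x_k$, and the switching rule guarantees that whenever $u_k = K_1 x_k$ one has $\|(K_1-K_0)x_k\| < M$. Suppose $P_0 \succ 0$ and $0<\rho_0<1$ satisfy $(A+BK_0)^T P_0 (A+BK_0) \preceq \rho_0 P_0$, and the noise $(w_k)$ is i.i.d. with mean zero, covariance $W$, and is independent of the past. Then for every $k$, $\mathbb{E}\,[x_k^T P_0 x_k] \le \frac{4(1+\rho_0)(M^2 \|B\|^2 \|P_0\| + \operatorname{tr}(W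 P_0))}{(1-\rho_0)^2}$. -/
open Matrix MeasureTheory ProbabilityTheory Finset
open scoped RealInnerProductSpace
open scoped RealInnerProductSpace
noncomputable def l2OpNorm {m n : ℕ} (A : Matrix (Fin m) (Fin n) ℝ) : ℝ :=
  ‖LinearMap.toContinuousLinearMap (Matrix.toEuclideanLin A)‖


variable {n m : ℕ}

lemma dot_self_nonneg (v : Fin n → ℝ) : 0 ≤ v ⬝ᵥ v :=
  Finset.sum_nonneg fun i _ => mul_self_nonneg _

lemma euclid_norm_sq (v : Fin n → ℝ) :
    ‖(WithLp.equiv 2 (Fin n → ℝ)).symm v‖ ^ 2 = v ⬝ᵥ v := by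
  rw [EuclideanSpace.norm_eq, Real.sq_sqrt (Finset.sum_nonneg fun i _ => sq_nonneg _)]
  simp [dotProduct, sq]

lemma euclid_inner (a b : Fin n → ℝ) :
    ⟪(WithLp.equiv 2 (Fin n → ℝ)).symm a, (WithLp.equiv 2 (Fin n → ℝ)).symm b⟫ = a ⬝ᵥ b := by
  simp [PiLp.inner_apply, dotProduct]
  exact Finset.sum_congr rfl fun i _ => mul_comm _ _

lemma l2OpNorm_nonneg (A : Matrix (Fin m) (Fin n) ℝ) : 0 ≤ l2OpNorm A := norm_nonneg _

lemma mulVec_dot_le (A : Matrix (Fin m) (Fin n) ℝ) (v : Fin n → ℝ) :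
    (A *ᵥ v) ⬝ᵥ (A *ᵥ v) ≤ l2OpNorm A ^ 2 * (v ⬝ᵥ v) := by
  have h := (LinearMap.toContinuousLinearMap (Matrix.toEuclideanLin A)).le_opNorm
    ((WithLp.equiv 2 (Fin n → ℝ)).symm v)
  have he : (LinearMap.toContinuousLinearMap (Matrix.toEuclideanLin A))
      ((WithLp.equiv 2 (Fin n → ℝ)).symm v) = (WithLp.equiv 2 (Fin m → ℝ)).symm (A *ᵥ v) := rfl
  rw [he] at h
  have h2 : ‖(WithLp.equiv 2 (Fin m → ℝ)).symm (A *ᵥ v)‖ ^ 2 ≤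
      (l2OpNorm A * ‖(WithLp.equiv 2 (Fin n → ℝ)).symm v‖) ^ 2 :=
    pow_le_pow_left₀ (norm_nonneg _) h 2
  rw [euclid_norm_sq] at h2
  calc (A *ᵥ v) ⬝ᵥ (A *ᵥ v) ≤ (l2OpNorm A * ‖(WithLp.equiv 2 (Fin n → ℝ)).symm v‖) ^ 2 := h2
    _ = l2OpNorm A ^ 2 * (v ⬝ᵥ v) := by rw [mul_pow, euclid_norm_sq]

lemma quad_le_opNorm (P : Matrix (Fin n) (Fin n) ℝ) (v : Fin n → ℝ) :
    v ⬝ᵥ P *ᵥ v ≤ l2OpNorm P * (v ⬝ᵥ v) := by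
  have h1 : v ⬝ᵥ P *ᵥ v =
      ⟪(WithLp.equiv 2 (Fin n → ℝ)).symm v, (WithLp.equiv 2 (Fin n → ℝ)).symm (P *ᵥ v)⟫ :=
    (euclid_inner _ _).symm
  have he : (LinearMap.toContinuousLinearMap (Matrix.toEuclideanLin P))
      ((WithLp.equiv 2 (Fin n → ℝ)).symm v) = (WithLp.equiv 2 (Fin n → ℝ)).symm (P *ᵥ v) := rfl
  have hcs := real_inner_le_norm ((WithLp.equiv 2 (Fin n → ℝ)).symm v)
      ((WithLp.equiv 2 (Fin n → ℝ)).symm (P *ᵥ v))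
  have hop : ‖(WithLp.equiv 2 (Fin n → ℝ)).symm (P *ᵥ v)‖ ≤
      l2OpNorm P * ‖(WithLp.equiv 2 (Fin n → ℝ)).symm v‖ := by
    rw [← he]; exact (LinearMap.toContinuousLinearMap (Matrix.toEuclideanLin P)).le_opNorm _
  have hnn : (0:ℝ) ≤ ‖(WithLp.equiv 2 (Fin n → ℝ)).symm v‖ := norm_nonneg _
  calc v ⬝ᵥ P *ᵥ v ≤ ‖(WithLp.equiv 2 (Fin n → ℝ)).symm v‖ *
        ‖(WithLp.equiv 2 (Fin n → ℝ)).symm (P *ᵥ v)‖ := h1 ▸ hcs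
    _ ≤ ‖(WithLp.equiv 2 (Fin n → ℝ)).symm v‖ * (l2OpNorm P * ‖(WithLp.equiv 2 (Fin n → ℝ)).symm v‖) := by
        exact mul_le_mul_of_nonneg_left hop hnn
    _ = l2OpNorm P * (v ⬝ᵥ v) := by
        rw [← euclid_norm_sq]; ring

lemma bilin_symm {P : Matrix (Fin n) (Fin n) ℝ} (hP : Pᵀ = P) (a b : Fin n → ℝ) :
    a ⬝ᵥ P *ᵥ b = b ⬝ᵥ P *ᵥ a := by
  rw [dotProduct_comm, ← hP, mulVec_transpose, ← dotProduct_mulVec, hP]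

lemma psd_transpose_eq {P : Matrix (Fin n) (Fin n) ℝ} (hP : P.IsHermitian) : Pᵀ = P := by
  rwa [Matrix.IsHermitian, conjTranspose_eq_transpose_of_trivial] at hP

lemma psd_cs {P : Matrix (Fin n) (Fin n) ℝ} (hP : P.PosSemidef) (a b : Fin n → ℝ) :
    (a ⬝ᵥ P *ᵥ b) ^ 2 ≤ (a ⬝ᵥ P *ᵥ a) * (b ⬝ᵥ P *ᵥ b) := by
  have hsym := psd_transpose_eq hP.1
  have key : ∀ t : ℝ, 0 ≤ (a ⬝ᵥ P *ᵥ a) * (t * t) + (2 * (a ⬝ᵥ P *ᵥ b)) * t + b ⬝ᵥ P *ᵥ b := by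
    intro t
    have h0 := hP.dotProduct_mulVec_nonneg (t • a + b)
    simp only [star_trivial] at h0
    have hexp : (t • a + b) ⬝ᵥ P *ᵥ (t • a + b) =
        (a ⬝ᵥ P *ᵥ a) * (t * t) + (2 * (a ⬝ᵥ P *ᵥ b)) * t + b ⬝ᵥ P *ᵥ b := by
      simp only [mulVec_add, mulVec_smul, dotProduct_add, add_dotProduct, smul_dotProduct,
        dotProduct_smul, smul_eq_mul]
      rw [bilin_symm hsym b a]; ring
    linarith [hexp ▸ h0]
  have hd := discrim_le_zero key
  rw [discrim] at hd
  nlinarith [hd]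

lemma psd_young {P : Matrix (Fin n) (Fin n) ℝ} (hP : P.PosSemidef) {ε : ℝ} (hε : 0 < ε)
    (a b : Fin n → ℝ) :
    (a + b) ⬝ᵥ P *ᵥ (a + b) ≤ (1 + ε) * (a ⬝ᵥ P *ᵥ a) + (1 + ε⁻¹) * (b ⬝ᵥ P *ᵥ b) := by
  have hsym := psd_transpose_eq hP.1
  have hQa := hP.dotProduct_mulVec_nonneg a; have hQb := hP.dotProduct_mulVec_nonneg b
  simp only [star_trivial] at hQa hQb
  have hexp : (a + b) ⬝ᵥ P *ᵥ (a + b) =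
      a ⬝ᵥ P *ᵥ a + 2 * (a ⬝ᵥ P *ᵥ b) + b ⬝ᵥ P *ᵥ b := by
    simp only [mulVec_add, dotProduct_add, add_dotProduct]
    rw [bilin_symm hsym b a]; ring
  have hcs := psd_cs hP a b
  set Qa := a ⬝ᵥ P *ᵥ a; set Qb := b ⬝ᵥ P *ᵥ b; set Bb := a ⬝ᵥ P *ᵥ b
  have h2 : 2 * Bb * ε ≤ ε ^ 2 * Qa + Qb := by
    nlinarith [mul_nonneg (pow_pos hε 2).le hQa, hQb, sq_nonneg (ε ^ 2 * Qa - Qb),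
      mul_le_mul_of_nonneg_left hcs (show (0:ℝ) ≤ 4 * ε ^ 2 by positivity)]
  have h3 : 2 * Bb ≤ ε * Qa + ε⁻¹ * Qb := by
    rw [inv_eq_one_div]
    rw [show ε * Qa + 1 / ε * Qb = (ε ^ 2 * Qa + Qb) / ε by field_simp]
    rw [le_div_iff₀ hε]; linarith
  rw [hexp]; linarith

lemma quad_lower {P : Matrix (Fin n) (Fin n) ℝ} (hP : P.PosDef) (v : Fin n → ℝ) :
    v ⬝ᵥ v ≤ l2OpNorm P⁻¹ * (v ⬝ᵥ P *ᵥ v) := by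
  have hPv : P *ᵥ (P⁻¹ *ᵥ v) = v := by
    rw [mulVec_mulVec, Matrix.mul_nonsing_inv P (isUnit_iff_ne_zero.mpr hP.det_pos.ne'),
      one_mulVec]
  have hcs := psd_cs hP.posSemidef v (P⁻¹ *ᵥ v)
  rw [hPv] at hcs
  rw [dotProduct_comm (P⁻¹ *ᵥ v) v] at hcs
  have h3 : v ⬝ᵥ P⁻¹ *ᵥ v ≤ l2OpNorm P⁻¹ * (v ⬝ᵥ v) := quad_le_opNorm _ _
  have hQ := hP.posSemidef.dotProduct_mulVec_nonneg v
  simp only [star_trivial] at hQ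
  have hvv := dot_self_nonneg v
  rcases eq_or_lt_of_le hvv with h0 | h0
  · rw [← h0]; exact mul_nonneg (l2OpNorm_nonneg _) hQ
  · have := hcs.trans (mul_le_mul_of_nonneg_left h3 hQ)
    nlinarith [this]

lemma measurable_mulVec_comp {α : Type*} [MeasurableSpace α] (A : Matrix (Fin m) (Fin n) ℝ)
    {f : α → Fin n → ℝ} (hf : Measurable f) : Measurable (fun a => A *ᵥ f a) := by
  rw [measurable_pi_iff]
  intro i
  simp only [Matrix.mulVec, dotProduct]
  exact Finset.measurable_sum _ fun j _ => (measurable_const.mul ((measurable_pi_apply j).comp hf))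

lemma measurable_dot {α : Type*} [MeasurableSpace α] {f g : α → Fin n → ℝ}
    (hf : Measurable f) (hg : Measurable g) : Measurable (fun a => f a ⬝ᵥ g a) := by
  simp only [dotProduct]
  exact Finset.measurable_sum _ fun j _ =>
    ((measurable_pi_apply j).comp hf).mul ((measurable_pi_apply j).comp hg)

lemma dot_mulVec_expand (P : Matrix (Fin n) (Fin n) ℝ) (a b : Fin n → ℝ) :
    a ⬝ᵥ P *ᵥ b = ∑ i, ∑ j, P i j * (a i * b j) := by
  simp only [dotProduct, Matrix.mulVec, Finset.mul_sum]
  exact Finset.sum_congr rfl fun i _ => Finset.sum_congr rfl fun j _ => by ring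

set_option maxHeartbeats 2000000 in
/-- Uniform bound on `E[xₖᵀ P₀ xₖ]` for the switched closed-loop system. -/
theorem stmt_18 {Ω : Type*} [MeasurableSpace Ω] (μ : Measure Ω) [IsProbabilityMeasure μ]
    {n m : ℕ} (A : Matrix (Fin n) (Fin n) ℝ) (B : Matrix (Fin n) (Fin m) ℝ)
    (K0 K1 : Matrix (Fin m) (Fin n) ℝ) (W P0 : Matrix (Fin n) (Fin n) ℝ)
    (hW : W.PosSemidef) (hP0 : P0.PosDef) (ρ0 : ℝ) (hρ0 : 0 < ρ0) (hρ1 : ρ0 < 1)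
    (hLyap : (ρ0 • P0 - (A + B * K0)ᵀ * P0 * (A + B * K0)).PosSemidef)
    (M : ℝ) (hM : 0 < M)
    (x : ℕ → Ω → Fin n → ℝ) (u : ℕ → Ω → Fin m → ℝ) (w : ℕ → Ω → Fin n → ℝ)
    (hxmeas : ∀ k, Measurable (x k)) (humeas : ∀ k, Measurable (u k))
    (hwmeas : ∀ k, Measurable (w k))
    (hx0 : ∀ ω, x 0 ω = 0)
    (hdyn : ∀ k ω, x (k + 1) ω = A.mulVec (x k ω) + B.mulVec (u k ω) + w k ω)
    (hswitch : ∀ k ω, u k ω = K1.mulVec (x k ω) ∨ u k ω = K0.mulVec (x k ω))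
    (hguard : ∀ k ω, u k ω = K1.mulVec (x k ω) →
      Real.sqrt ((K1 - K0).mulVec (x k ω) ⬝ᵥ (K1 - K0).mulVec (x k ω)) < M)
    (hident : ∀ k, Measure.map (w k) μ = Measure.map (w 0) μ)
    (hmean : ∀ k i, ∫ ω, w k ω i ∂μ = 0)
    (hcov : ∀ k i j, ∫ ω, w k ω i * w k ω j ∂μ = W i j)
    (hwint : ∀ k i j, Integrable (fun ω => w k ω i * w k ω j) μ)
    (hindep : ∀ k, IndepFun (w k) (fun ω => (x k ω, u k ω)) μ)
    (hxint : ∀ k, Integrable (fun ω => x k ω ⬝ᵥ P0.mulVec (x k ω)) μ) :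
    ∀ k, ∫ ω, x k ω ⬝ᵥ P0.mulVec (x k ω) ∂μ ≤
      4 * (1 + ρ0) * (M ^ 2 * l2OpNorm B ^ 2 * l2OpNorm P0 + (W * P0).trace) /
        (1 - ρ0) ^ 2 := by
  -- setup
  set F : Matrix (Fin n) (Fin n) ℝ := A + B * K0 with hF
  set Q : (Fin n → ℝ) → ℝ := fun v => v ⬝ᵥ P0 *ᵥ v with hQdef
  set d : ℕ → Ω → Fin n → ℝ := fun k ω => B *ᵥ (u k ω - K0 *ᵥ x k ω) with hd
  set g : ℕ → Ω → Fin n → ℝ := fun k ω => F *ᵥ x k ω + d k ω with hg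
  have hsym : P0ᵀ = P0 := psd_transpose_eq hP0.posSemidef.1
  have hQnonneg : ∀ v, 0 ≤ Q v := fun v => by
    have := hP0.posSemidef.dotProduct_mulVec_nonneg v; simpa [star_trivial] using this
  have hdyn' : ∀ k ω, x (k + 1) ω = g k ω + w k ω := by
    intro k ω
    rw [hdyn k ω]
    simp only [hg, hd, hF, add_mulVec, mulVec_sub, ← mulVec_mulVec]
    abel
  set ε : ℝ := (1 - ρ0) / (2 * ρ0) with hε
  have hεpos : 0 < ε := by apply div_pos <;> linarith
  set ρ' : ℝ := (1 + ρ0) / 2 with hρ'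
  set L : ℝ := l2OpNorm P0 * (l2OpNorm B ^ 2 * M ^ 2) with hL
  set C0 : ℝ := (1 + ε⁻¹) * L with hC0
  have hLnn : 0 ≤ L := by
    apply mul_nonneg (l2OpNorm_nonneg _)
    positivity
  have hεinv : (1 : ℝ) + ε⁻¹ = (1 + ρ0) / (1 - ρ0) := by
    have h1ρ : (1:ℝ) - ρ0 ≠ 0 := by linarith
    have h2ρ : ρ0 ≠ 0 := ne_of_gt hρ0
    rw [hε]
    field_simp
    ring
  have hC0nn : 0 ≤ C0 := by
    apply mul_nonneg _ hLnn
    positivity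
  -- bound on disturbance
  have hQd : ∀ k ω, d k ω ⬝ᵥ d k ω ≤ l2OpNorm B ^ 2 * M ^ 2 := by
    intro k ω
    rcases hswitch k ω with h1 | h0
    · have hy : u k ω - K0 *ᵥ x k ω = (K1 - K0) *ᵥ x k ω := by
        rw [h1, sub_mulVec]
      set y : Fin m → ℝ := (K1 - K0) *ᵥ x k ω with hy'
      have hyM := hguard k ω h1
      have hyy : y ⬝ᵥ y < M ^ 2 := by
        have h2 : Real.sqrt (y ⬝ᵥ y) ^ 2 < M ^ 2 := by
          apply pow_lt_pow_left₀ hyM (Real.sqrt_nonneg _)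
          norm_num
        rwa [Real.sq_sqrt (dot_self_nonneg y)] at h2
      calc d k ω ⬝ᵥ d k ω = (B *ᵥ y) ⬝ᵥ (B *ᵥ y) := by rw [hd]; simp only [hy]
        _ ≤ l2OpNorm B ^ 2 * (y ⬝ᵥ y) := mulVec_dot_le B y
        _ ≤ l2OpNorm B ^ 2 * M ^ 2 := by
            apply mul_le_mul_of_nonneg_left hyy.le (by positivity)
    · have hz : d k ω = 0 := by
        rw [hd]; simp only [h0, sub_self, mulVec_zero]
      rw [hz]
      simp only [zero_dotProduct]
      positivity
  -- contraction
  have hcontract : ∀ v, (F *ᵥ v) ⬝ᵥ P0 *ᵥ (F *ᵥ v) ≤ ρ0 * Q v := by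
    intro v
    have h := hLyap.dotProduct_mulVec_nonneg v
    simp only [star_trivial] at h
    have hexp : v ⬝ᵥ (ρ0 • P0 - Fᵀ * P0 * F) *ᵥ v
        = ρ0 * Q v - (F *ᵥ v) ⬝ᵥ P0 *ᵥ (F *ᵥ v) := by
      rw [sub_mulVec, dotProduct_sub, smul_mulVec, dotProduct_smul, smul_eq_mul]
      congr 1
      rw [← mulVec_mulVec, ← mulVec_mulVec, dotProduct_mulVec, vecMul_transpose]
    rw [hexp] at h
    linarith
  -- pointwise bound on Q (g k ω)
  have hQg : ∀ k ω, Q (g k ω) ≤ ρ' * Q (x k ω) + C0 := by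
    intro k ω
    have hy := psd_young hP0.posSemidef hεpos (F *ᵥ x k ω) (d k ω)
    have h1 : (1 + ε) * ((F *ᵥ x k ω) ⬝ᵥ P0 *ᵥ (F *ᵥ x k ω)) ≤ (1 + ε) * (ρ0 * Q (x k ω)) :=
      mul_le_mul_of_nonneg_left (hcontract _) (by positivity)
    have h2 : d k ω ⬝ᵥ P0 *ᵥ d k ω ≤ L := by
      calc d k ω ⬝ᵥ P0 *ᵥ d k ω ≤ l2OpNorm P0 * (d k ω ⬝ᵥ d k ω) := quad_le_opNorm _ _
        _ ≤ L := by
            rw [hL]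
            exact mul_le_mul_of_nonneg_left (hQd k ω) (l2OpNorm_nonneg _)
    have h3 : (1 + ε⁻¹) * (d k ω ⬝ᵥ P0 *ᵥ d k ω) ≤ C0 := by
      rw [hC0]
      exact mul_le_mul_of_nonneg_left h2 (by positivity)
    have hρeq : (1 + ε) * ρ0 = ρ' := by
      rw [hε, hρ']; field_simp; ring
    calc Q (g k ω) ≤ (1 + ε) * ((F *ᵥ x k ω) ⬝ᵥ P0 *ᵥ (F *ᵥ x k ω))
          + (1 + ε⁻¹) * (d k ω ⬝ᵥ P0 *ᵥ d k ω) := hy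
      _ ≤ (1 + ε) * (ρ0 * Q (x k ω)) + C0 := add_le_add h1 h3
      _ = ρ' * Q (x k ω) + C0 := by rw [← mul_assoc, hρeq]
  -- measurability
  have hdmeas : ∀ k, Measurable (d k) := fun k =>
    measurable_mulVec_comp B ((humeas k).sub (measurable_mulVec_comp K0 (hxmeas k)))
  have hgmeas : ∀ k, Measurable (g k) := fun k =>
    (measurable_mulVec_comp F (hxmeas k)).add (hdmeas k)
  -- integrability of ‖x‖²
  set c : ℝ := l2OpNorm P0⁻¹ with hc
  have hcnn : 0 ≤ c := l2OpNorm_nonneg _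
  have hx2int : ∀ k, Integrable (fun ω => x k ω ⬝ᵥ x k ω) μ := by
    intro k
    apply Integrable.mono' ((hxint k).const_mul c)
      (measurable_dot (hxmeas k) (hxmeas k)).aestronglyMeasurable
    filter_upwards with ω
    rw [Real.norm_eq_abs, abs_of_nonneg (dot_self_nonneg _)]
    exact quad_lower hP0 (x k ω)
  -- integrability of coordinates
  have hxabs : ∀ k j, Integrable (fun ω => |x k ω j|) μ := by
    intro k j
    apply Integrable.mono' ((integrable_const (1:ℝ)).add (hx2int k))
      ((measurable_pi_apply j).comp (hxmeas k)).abs.aestronglyMeasurable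
    filter_upwards with ω
    rw [Real.norm_eq_abs, abs_abs]
    simp only [Pi.add_apply, Function.comp_apply]
    have h1 : x k ω j * x k ω j ≤ x k ω ⬝ᵥ x k ω := by
      have := Finset.single_le_sum (f := fun i => x k ω i * x k ω i)
        (fun i _ => mul_self_nonneg _) (Finset.mem_univ j)
      simpa [dotProduct] using this
    nlinarith [abs_nonneg (x k ω j), sq_abs (x k ω j), sq_nonneg (|x k ω j| - 1)]
  -- bound on coordinates of d
  have hdcoord : ∀ k ω i, |d k ω i| ≤ l2OpNorm B * M := by
    intro k ω i
    have h1 : d k ω i * d k ω i ≤ d k ω ⬝ᵥ d k ω := by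
      have := Finset.single_le_sum (f := fun j => d k ω j * d k ω j)
        (fun j _ => mul_self_nonneg _) (Finset.mem_univ i)
      simpa [dotProduct] using this
    have h2 : d k ω i ^ 2 ≤ (l2OpNorm B * M) ^ 2 := by
      rw [sq, mul_pow]; nlinarith [hQd k ω]
    have h3 : (0:ℝ) ≤ l2OpNorm B * M := mul_nonneg (l2OpNorm_nonneg _) hM.le
    calc |d k ω i| = Real.sqrt (d k ω i ^ 2) := (Real.sqrt_sq_eq_abs _).symm
      _ ≤ Real.sqrt ((l2OpNorm B * M) ^ 2) := Real.sqrt_le_sqrt h2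
      _ = l2OpNorm B * M := Real.sqrt_sq h3
  -- integrability of coordinates of g
  have hgint : ∀ k i, Integrable (fun ω => g k ω i) μ := by
    intro k i
    apply Integrable.mono'
      ((integrable_finset_sum Finset.univ
          (fun j _ => ((hxabs k j).const_mul |F i j|))).add (integrable_const (l2OpNorm B * M)))
      ((measurable_pi_apply i).comp (hgmeas k)).aestronglyMeasurable
    filter_upwards with ω
    rw [Real.norm_eq_abs]
    have h1 : g k ω i = (F *ᵥ x k ω) i + d k ω i := rfl
    have h2 : |(F *ᵥ x k ω) i| ≤ ∑ j, |F i j| * |x k ω j| := by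
      simp only [Matrix.mulVec, dotProduct]
      calc |∑ j, F i j * x k ω j| ≤ ∑ j, |F i j * x k ω j| := Finset.abs_sum_le_sum_abs _ _
        _ = ∑ j, |F i j| * |x k ω j| := by simp [abs_mul]
    calc |g k ω i| ≤ |(F *ᵥ x k ω) i| + |d k ω i| := h1 ▸ abs_add_le _ _
      _ ≤ (∑ j, |F i j| * |x k ω j|) + l2OpNorm B * M := add_le_add h2 (hdcoord k ω i)
  -- integrability of coordinates of w
  have hwcoordint : ∀ k j, Integrable (fun ω => w k ω j) μ := by
    intro k j
    apply Integrable.mono' ((integrable_const (1:ℝ)).add (hwint k j j))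
      ((measurable_pi_apply j).comp (hwmeas k)).aestronglyMeasurable
    filter_upwards with ω
    rw [Real.norm_eq_abs]
    simp only [Pi.add_apply, Function.comp_apply]
    nlinarith [abs_nonneg (w k ω j), sq_abs (w k ω j), sq_nonneg (|w k ω j| - 1)]
  -- independence of g-coordinates and w-coordinates
  have hφmeas : ∀ i : Fin n, Measurable (fun p : (Fin n → ℝ) × (Fin m → ℝ) =>
      (F *ᵥ p.1 + B *ᵥ (p.2 - K0 *ᵥ p.1)) i) := fun i =>
    (measurable_pi_apply i).comp ((measurable_mulVec_comp F measurable_fst).add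
      (measurable_mulVec_comp B (measurable_snd.sub (measurable_mulVec_comp K0 measurable_fst))))
  have hindep' : ∀ k (i j : Fin n), IndepFun (fun ω => g k ω i) (fun ω => w k ω j) μ := by
    intro k i j
    exact ((hindep k).comp (measurable_pi_apply j) (hφmeas i)).symm
  have hcrossint : ∀ k (i j : Fin n), Integrable (fun ω => g k ω i * w k ω j) μ := by
    intro k i j
    have h := (hindep' k i j).integrable_mul (hgint k i) (hwcoordint k j)
    exact h
  have hcrosszero : ∀ k (i j : Fin n), ∫ ω, g k ω i * w k ω j ∂μ = 0 := by
    intro k i j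
    have h := (hindep' k i j).integral_mul_eq_mul_integral (hgint k i).aestronglyMeasurable (hwcoordint k j).aestronglyMeasurable
    have h2 : integral μ ((fun ω => g k ω i) * fun ω => w k ω j)
        = ∫ ω, g k ω i * w k ω j ∂μ := rfl
    rw [h2] at h
    rw [h, hmean k j, mul_zero]
  -- cross term function
  have hfe : ∀ k, (fun ω => g k ω ⬝ᵥ P0 *ᵥ w k ω)
      = fun ω => ∑ i, ∑ j, P0 i j * (g k ω i * w k ω j) :=
    fun k => funext fun ω => dot_mulVec_expand P0 _ _
  have hcrossfun : ∀ k, Integrable (fun ω => g k ω ⬝ᵥ P0 *ᵥ w k ω) μ := by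
    intro k
    rw [hfe k]
    exact integrable_finset_sum _ fun i _ =>
      integrable_finset_sum _ fun j _ => (hcrossint k i j).const_mul _
  have hcrossI0 : ∀ k, ∫ ω, g k ω ⬝ᵥ P0 *ᵥ w k ω ∂μ = 0 := by
    intro k
    rw [hfe k, integral_finset_sum _ (fun i _ =>
      integrable_finset_sum _ fun j _ => (hcrossint k i j).const_mul (P0 i j))]
    refine Finset.sum_eq_zero fun i _ => ?_
    rw [integral_finset_sum _ (fun j _ => (hcrossint k i j).const_mul _)]
    refine Finset.sum_eq_zero fun j _ => ?_
    rw [integral_const_mul, hcrosszero k i j, mul_zero]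
  -- noise quadratic form
  have hQwfe : ∀ k, (fun ω => Q (w k ω)) = fun ω => ∑ i, ∑ j, P0 i j * (w k ω i * w k ω j) :=
    fun k => funext fun ω => dot_mulVec_expand P0 _ _
  have hQwint : ∀ k, Integrable (fun ω => Q (w k ω)) μ := by
    intro k
    rw [hQwfe k]
    exact integrable_finset_sum _ fun i _ =>
      integrable_finset_sum _ fun j _ => (hwint k i j).const_mul _
  have hQwval : ∀ k, ∫ ω, Q (w k ω) ∂μ = (W * P0).trace := by
    intro k
    rw [hQwfe k, integral_finset_sum _ (fun i _ =>
      integrable_finset_sum _ fun j _ => (hwint k i j).const_mul (P0 i j))]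
    have htr : (W * P0).trace = ∑ i, ∑ j, W i j * P0 j i := by
      simp [Matrix.trace, Matrix.mul_apply, Matrix.diag]
    rw [htr]
    refine Finset.sum_congr rfl fun i _ => ?_
    rw [integral_finset_sum _ (fun j _ => (hwint k i j).const_mul _)]
    refine Finset.sum_congr rfl fun j _ => ?_
    rw [integral_const_mul, hcov k i j]
    have hp : P0 j i = P0 i j := by rw [← Matrix.transpose_apply P0 i j, hsym]
    rw [hp]; ring
  -- integrability of Q ∘ g
  have hQgint : ∀ k, Integrable (fun ω => Q (g k ω)) μ := by
    intro k
    apply Integrable.mono' (((hxint k).const_mul ρ').add (integrable_const C0))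
      (measurable_dot (hgmeas k) (measurable_mulVec_comp P0 (hgmeas k))).aestronglyMeasurable
    filter_upwards with ω
    rw [Real.norm_eq_abs, abs_of_nonneg (hQnonneg _)]
    simpa only [Pi.add_apply] using hQg k ω
  -- pointwise split of Q (x (k+1))
  have hsplit : ∀ k ω, Q (x (k + 1) ω)
      = Q (g k ω) + 2 * (g k ω ⬝ᵥ P0 *ᵥ w k ω) + Q (w k ω) := by
    intro k ω
    rw [hdyn' k ω]
    simp only [hQdef]
    simp only [mulVec_add, dotProduct_add, add_dotProduct]
    rw [bilin_symm hsym (w k ω) (g k ω)]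
    ring
  -- one-step inequality
  set T : ℝ := (W * P0).trace with hT'
  have hstep : ∀ k, ∫ ω, Q (x (k + 1) ω) ∂μ ≤ ρ' * ∫ ω, Q (x k ω) ∂μ + (C0 + T) := by
    intro k
    have heq : (fun ω => Q (x (k + 1) ω))
        = fun ω => Q (g k ω) + 2 * (g k ω ⬝ᵥ P0 *ᵥ w k ω) + Q (w k ω) :=
      funext fun ω => hsplit k ω
    have hint1 : Integrable (fun ω => Q (g k ω) + 2 * (g k ω ⬝ᵥ P0 *ᵥ w k ω)) μ :=
      (hQgint k).add ((hcrossfun k).const_mul 2)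
    have hIval : ∫ ω, Q (x (k + 1) ω) ∂μ
        = ∫ ω, Q (g k ω) ∂μ + 2 * ∫ ω, g k ω ⬝ᵥ P0 *ᵥ w k ω ∂μ + ∫ ω, Q (w k ω) ∂μ := by
      rw [show (∫ ω, Q (x (k + 1) ω) ∂μ)
          = ∫ ω, (Q (g k ω) + 2 * (g k ω ⬝ᵥ P0 *ᵥ w k ω) + Q (w k ω)) ∂μ by rw [← heq],
        integral_add hint1 (hQwint k),
        integral_add (hQgint k) ((hcrossfun k).const_mul 2), integral_const_mul]
    have hQgbound : ∫ ω, Q (g k ω) ∂μ ≤ ρ' * ∫ ω, Q (x k ω) ∂μ + C0 := by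
      have h1 : ∫ ω, Q (g k ω) ∂μ ≤ ∫ ω, (ρ' * Q (x k ω) + C0) ∂μ :=
        integral_mono (hQgint k) (((hxint k).const_mul ρ').add (integrable_const C0))
          fun ω => hQg k ω
      rwa [integral_add ((hxint k).const_mul ρ') (integrable_const C0), integral_const_mul,
        integral_const, probReal_univ, smul_eq_mul, one_mul] at h1
    rw [hIval, hcrossI0 k, hQwval k, mul_zero, add_zero]
    linarith
  -- nonnegativity of the trace term
  have hTnn : 0 ≤ T := by
    rw [← hQwval 0]
    exact integral_nonneg fun ω => hQnonneg _
  -- induction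
  have h1ρ' : 0 < 1 - ρ' := by rw [hρ']; linarith
  set Bd : ℝ := (C0 + T) / (1 - ρ') with hBd
  have hBdnn : 0 ≤ Bd := div_nonneg (by linarith) h1ρ'.le
  have hbound : ∀ k, ∫ ω, Q (x k ω) ∂μ ≤ Bd := by
    intro k
    induction k with
    | zero =>
        have h0 : (fun ω => Q (x 0 ω)) = fun _ => (0:ℝ) := funext fun ω => by
          rw [hx0 ω]; simp [hQdef]
        rw [h0, integral_zero]
        exact hBdnn
    | succ k ih =>
        calc ∫ ω, Q (x (k + 1) ω) ∂μ ≤ ρ' * ∫ ω, Q (x k ω) ∂μ + (C0 + T) := hstep k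
          _ ≤ ρ' * Bd + (C0 + T) := by
              have hρ'nn : 0 ≤ ρ' := by rw [hρ']; linarith
              exact add_le_add_left (mul_le_mul_of_nonneg_left ih hρ'nn) _
          _ = Bd := by
              rw [hBd]
              field_simp
              ring
  -- conclusion
  intro k
  refine (hbound k).trans ?_
  have hC0eq : C0 = (1 + ρ0) / (1 - ρ0) * L := by rw [hC0, hεinv]
  have hLeq : M ^ 2 * l2OpNorm B ^ 2 * l2OpNorm P0 = L := by rw [hL]; ring
  rw [hBd, hC0eq, hLeq, hρ']
  have h1 : (0:ℝ) < 1 - ρ0 := by linarith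
  rw [div_le_div_iff₀ (by linarith) (by positivity)]
  have hexp : ((1 + ρ0) / (1 - ρ0) * L + T) * (1 - ρ0) ^ 2
      = ((1 + ρ0) * L * (1 - ρ0) + T * (1 - ρ0) ^ 2) := by
    field_simp
  rw [hexp]
  nlinarith [hLnn, hTnn, hρ0.le, mul_nonneg hLnn hρ0.le, mul_nonneg hTnn hρ0.le,
    mul_nonneg (mul_nonneg hLnn hρ0.le) hρ0.le, mul_nonneg (mul_nonneg hTnn hρ0.le) hρ0.le]
end

section
/- Under the assumptions of the previous statement (switched LQR system with threshold $M$, fallback Lyapunov pair $(P_0, \rho_0)$ satisfying the Lyapunov equation $(A+BK_0)^T P_0 (A+BK_0) - P_0 + Q + K_0^T R K_0 = 0$ with $Q, R \succ 0$), the infinite-horizon average LQ cost $J = \limsup_{T\to\infty} \frac{1}{T}\mathbb{E}\sum_{k=0}^{T-1}(x_k^T Q x_k + u_k^T R u_k)$ satisfies $J \le \Big(\frac{8(1+\rho_0)\|B\|^2 \|P_0\|}{(1-\rho_0)^2} + 2\|R\|\Big) M^2 + \frac{8(1+\rho_0)\operatorname{tr}(W P_0)}{(1-\rho_0)^2}$,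 regardless of whether $A + BK_1$ is stable. -/
open Matrix MeasureTheory ProbabilityTheory Finset Filter

namespace StmtAux
variable {n' m' : ℕ} {Ω : Type*} [MeasurableSpace Ω] {μ : Measure Ω}

lemma dot_self_nonneg (v : Fin n' → ℝ) : 0 ≤ v ⬝ᵥ v :=
  Finset.sum_nonneg fun _ _ => mul_self_nonneg _

lemma dot_sq_eq_norm (v : Fin n' → ℝ) :
    v ⬝ᵥ v = ‖(WithLp.equiv 2 (Fin n' → ℝ)).symm v‖ ^ 2 := by
  rw [EuclideanSpace.norm_eq, Real.sq_sqrt (by positivity)]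
  simp [dotProduct, sq]

lemma l2OpNorm_nonneg (A : Matrix (Fin m') (Fin n') ℝ) : 0 ≤ l2OpNorm A := norm_nonneg _

lemma norm_mulVec_le (A : Matrix (Fin m') (Fin n') ℝ) (v : Fin n' → ℝ) :
    ‖(WithLp.equiv 2 (Fin m' → ℝ)).symm (A.mulVec v)‖ ≤
      l2OpNorm A * ‖(WithLp.equiv 2 (Fin n' → ℝ)).symm v‖ := by
  have h : (WithLp.equiv 2 (Fin m' → ℝ)).symm (A.mulVec v) =
      LinearMap.toContinuousLinearMap (Matrix.toEuclideanLin A)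
        ((WithLp.equiv 2 (Fin n' → ℝ)).symm v) := by
    simp [Matrix.toEuclideanLin_apply, LinearMap.coe_toContinuousLinearMap']
  rw [h]
  exact (LinearMap.toContinuousLinearMap (Matrix.toEuclideanLin A)).le_opNorm _

lemma dot_mulVec_self_le (A : Matrix (Fin m') (Fin n') ℝ) (v : Fin n' → ℝ) :
    A.mulVec v ⬝ᵥ A.mulVec v ≤ l2OpNorm A ^ 2 * (v ⬝ᵥ v) := by
  rw [dot_sq_eq_norm, dot_sq_eq_norm]
  have h := norm_mulVec_le A v
  nlinarith [norm_nonneg ((WithLp.equiv 2 (Fin m' → ℝ)).symm (A.mulVec v)),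
    norm_nonneg ((WithLp.equiv 2 (Fin n' → ℝ)).symm v), l2OpNorm_nonneg A]

lemma quad_le_opNorm (P : Matrix (Fin n') (Fin n') ℝ) (v : Fin n' → ℝ) :
    v ⬝ᵥ P.mulVec v ≤ l2OpNorm P * (v ⬝ᵥ v) := by
  set v' := (WithLp.equiv 2 (Fin n' → ℝ)).symm v with hv'
  set y' := (WithLp.equiv 2 (Fin n' → ℝ)).symm (P.mulVec v) with hy'
  have hinner : v ⬝ᵥ P.mulVec v = (inner ℝ v' y' : ℝ) := by
    simp [hv', hy', PiLp.inner_apply, dotProduct, RCLike.inner_apply, conj_trivial]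
    exact Finset.sum_congr rfl fun i _ => mul_comm _ _
  rw [hinner, dot_sq_eq_norm]
  calc (inner ℝ v' y' : ℝ) ≤ ‖v'‖ * ‖y'‖ := real_inner_le_norm v' y'
    _ ≤ ‖v'‖ * (l2OpNorm P * ‖v'‖) := by
        apply mul_le_mul_of_nonneg_left (norm_mulVec_le P v) (norm_nonneg _)
    _ = l2OpNorm P * ‖v'‖ ^ 2 := by ring

lemma psd_quad_nonneg {P : Matrix (Fin n') (Fin n') ℝ} (hP : P.PosSemidef)
    (v : Fin n' → ℝ) : 0 ≤ v ⬝ᵥ P.mulVec v := by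
  have := hP.dotProduct_mulVec_nonneg v
  simpa using this

lemma transpose_eq {P : Matrix (Fin n') (Fin n') ℝ} (hP : P.IsHermitian) : Pᵀ = P := by
  simpa [Matrix.conjTranspose_eq_transpose_of_trivial] using hP.eq

lemma dot_mulVec_symm {P : Matrix (Fin n') (Fin n') ℝ} (hP : Pᵀ = P)
    (a b : Fin n' → ℝ) : a ⬝ᵥ P.mulVec b = b ⬝ᵥ P.mulVec a := by
  rw [Matrix.dotProduct_mulVec, ← Matrix.mulVec_transpose, hP, dotProduct_comm]

lemma quad_transpose (C : Matrix (Fin m') (Fin n') ℝ) (P : Matrix (Fin m') (Fin m') ℝ)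
    (v : Fin n' → ℝ) :
    C.mulVec v ⬝ᵥ P.mulVec (C.mulVec v) = v ⬝ᵥ (Cᵀ * P * C).mulVec v := by
  rw [← Matrix.mulVec_mulVec, ← Matrix.mulVec_mulVec, Matrix.dotProduct_mulVec v Cᵀ,
    Matrix.vecMul_transpose]

lemma quad_add_le {P : Matrix (Fin n') (Fin n') ℝ} (hP : P.PosSemidef)
    (a b : Fin n' → ℝ) {ε : ℝ} (hε : 0 < ε) :
    (a + b) ⬝ᵥ P.mulVec (a + b) ≤
      (1 + ε) * (a ⬝ᵥ P.mulVec a) + (1 + ε⁻¹) * (b ⬝ᵥ P.mulVec b) := by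
  have hsym : Pᵀ = P := transpose_eq hP.1
  have hc : b ⬝ᵥ P.mulVec a = a ⬝ᵥ P.mulVec b := dot_mulVec_symm hsym b a
  have h0 : 0 ≤ (ε • a - b) ⬝ᵥ P.mulVec (ε • a - b) := psd_quad_nonneg hP _
  have hexp : (ε • a - b) ⬝ᵥ P.mulVec (ε • a - b) =
      ε ^ 2 * (a ⬝ᵥ P.mulVec a) - 2 * ε * (a ⬝ᵥ P.mulVec b) + b ⬝ᵥ P.mulVec b := by
    simp only [Matrix.mulVec_sub, Matrix.mulVec_smul, dotProduct_sub, sub_dotProduct,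
      dotProduct_smul, smul_dotProduct, smul_eq_mul, hc]
    ring
  have hexp2 : (a + b) ⬝ᵥ P.mulVec (a + b) =
      a ⬝ᵥ P.mulVec a + 2 * (a ⬝ᵥ P.mulVec b) + b ⬝ᵥ P.mulVec b := by
    simp only [Matrix.mulVec_add, dotProduct_add, add_dotProduct, hc]
    ring
  rw [hexp] at h0
  rw [hexp2]
  have h2 : ε⁻¹ * (ε ^ 2 * (a ⬝ᵥ P.mulVec a) - 2 * ε * (a ⬝ᵥ P.mulVec b) + b ⬝ᵥ P.mulVec b)
      = ε * (a ⬝ᵥ P.mulVec a) - 2 * (a ⬝ᵥ P.mulVec b) + ε⁻¹ * (b ⬝ᵥ P.mulVec b) := by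
    field_simp
  have h1 : 0 ≤ ε⁻¹ * (ε ^ 2 * (a ⬝ᵥ P.mulVec a) - 2 * ε * (a ⬝ᵥ P.mulVec b) + b ⬝ᵥ P.mulVec b) :=
    mul_nonneg (inv_nonneg.2 hε.le) h0
  rw [h2] at h1
  linarith

lemma quad_eq_sum (P : Matrix (Fin n') (Fin m') ℝ) (a : Fin n' → ℝ) (b : Fin m' → ℝ) :
    a ⬝ᵥ P.mulVec b = ∑ i, ∑ j, P i j * (a i * b j) := by
  simp only [dotProduct, Matrix.mulVec, Finset.mul_sum]
  exact Finset.sum_congr rfl fun i _ => Finset.sum_congr rfl fun j _ => by ring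

lemma memℒp2_mul_integrable {f g : Ω → ℝ} (hf : MemLp f 2 μ) (hg : MemLp g 2 μ) :
    Integrable (fun ω => f ω * g ω) μ := by
  have h : MemLp (g • f) 1 μ := hf.smul hg (hpqr := ⟨by simp [ENNReal.inv_two_add_inv_two]⟩)
  rw [← memLp_one_iff_integrable]
  have heq : (fun ω => f ω * g ω) = g • f := by
    funext ω; simp [Pi.smul_apply, smul_eq_mul, mul_comm]
  rw [heq]
  exact h

lemma memℒp2_of_bound [IsProbabilityMeasure μ] {f : Ω → ℝ} (hf : Measurable f)
    (C : ℝ) (h : ∀ ω, |f ω| ≤ C) : MemLp f 2 μ :=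
  (memLp_top_of_bound hf.aestronglyMeasurable C
    (Filter.Eventually.of_forall fun ω => by
      simpa [Real.norm_eq_abs] using h ω)).mono_exponent le_top

/-- Integrability and integral formula for a bilinear form of L² random vectors. -/
lemma integrable_bilin (P : Matrix (Fin n') (Fin m') ℝ) {f : Ω → Fin n' → ℝ}
    {g : Ω → Fin m' → ℝ}
    (hf : ∀ i, MemLp (fun ω => f ω i) 2 μ) (hg : ∀ j, MemLp (fun ω => g ω j) 2 μ) :
    Integrable (fun ω => f ω ⬝ᵥ P.mulVec (g ω)) μ ∧
      ∫ ω, f ω ⬝ᵥ P.mulVec (g ω) ∂μ = ∑ i, ∑ j, P i j * ∫ ω, f ω i * g ω j ∂μ := by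
  have hterm : ∀ (i : Fin n') (j : Fin m'),
      Integrable (fun ω => P i j * (f ω i * g ω j)) μ := fun i j =>
    (memℒp2_mul_integrable (hf i) (hg j)).const_mul _
  have hfun : (fun ω => f ω ⬝ᵥ P.mulVec (g ω)) =
      fun ω => ∑ i, ∑ j, P i j * (f ω i * g ω j) := by
    funext ω; exact quad_eq_sum P (f ω) (g ω)
  constructor
  · rw [hfun]
    exact integrable_finset_sum _ fun i _ => integrable_finset_sum _ fun j _ => hterm i j
  · rw [hfun, integral_finset_sum _ fun i _ => integrable_finset_sum _ fun j _ => hterm i j]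
    refine Finset.sum_congr rfl fun i _ => ?_
    rw [integral_finset_sum _ fun j _ => hterm i j]
    exact Finset.sum_congr rfl fun j _ => integral_const_mul _ _

lemma measurable_mulVec_apply (C : Matrix (Fin m') (Fin n') ℝ) (i : Fin m') :
    Measurable (fun v : Fin n' → ℝ => C.mulVec v i) := by
  simp only [Matrix.mulVec, dotProduct]
  exact Finset.measurable_sum _ fun j _ => (measurable_pi_apply j).const_mul _

lemma memℒp2_mulVec (C : Matrix (Fin m') (Fin n') ℝ) {f : Ω → Fin n' → ℝ}
    (hf : ∀ j, MemLp (fun ω => f ω j) 2 μ) (i : Fin m') :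
    MemLp (fun ω => C.mulVec (f ω) i) 2 μ := by
  have heq : (fun ω => C.mulVec (f ω) i) = fun ω => ∑ j, C i j * f ω j := by
    funext ω; simp [Matrix.mulVec, dotProduct]
  rw [heq]
  exact memLp_finset_sum _ fun j _ => (hf j).const_mul _

end StmtAux

set_option maxHeartbeats 2000000 in
/-- Bounded infinite-horizon average LQ cost for the switched controller, regardless of
whether `A + B K₁` is stable. -/
theorem stmt_19 {Ω : Type*} [MeasurableSpace Ω] (μ : Measure Ω) [IsProbabilityMeasure μ]
    {n m : ℕ} (A : Matrix (Fin n) (Fin n) ℝ) (B : Matrix (Fin n) (Fin m) ℝ)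
    (K0 K1 : Matrix (Fin m) (Fin n) ℝ) (W P0 Q : Matrix (Fin n) (Fin n) ℝ)
    (R : Matrix (Fin m) (Fin m) ℝ)
    (hW : W.PosSemidef) (hP0 : P0.PosDef) (hQ : Q.PosDef) (hR : R.PosDef)
    (ρ0 : ℝ) (hρ0 : 0 < ρ0) (hρ1 : ρ0 < 1)
    (hLyapEq : (A + B * K0)ᵀ * P0 * (A + B * K0) - P0 + Q + K0ᵀ * R * K0 = 0)
    (hLyap : (ρ0 • P0 - (A + B * K0)ᵀ * P0 * (A + B * K0)).PosSemidef)
    (M : ℝ) (hM : 0 < M)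
    (x : ℕ → Ω → Fin n → ℝ) (u : ℕ → Ω → Fin m → ℝ) (w : ℕ → Ω → Fin n → ℝ)
    (hxmeas : ∀ k, Measurable (x k)) (humeas : ∀ k, Measurable (u k))
    (hwmeas : ∀ k, Measurable (w k))
    (hx0 : ∀ ω, x 0 ω = 0)
    (hdyn : ∀ k ω, x (k + 1) ω = A.mulVec (x k ω) + B.mulVec (u k ω) + w k ω)
    (hswitch : ∀ k ω, u k ω = K1.mulVec (x k ω) ∨ u k ω = K0.mulVec (x k ω))
    (hguard : ∀ k ω, u k ω = K1.mulVec (x k ω) →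
      Real.sqrt ((K1 - K0).mulVec (x k ω) ⬝ᵥ (K1 - K0).mulVec (x k ω)) < M)
    (hident : ∀ k, Measure.map (w k) μ = Measure.map (w 0) μ)
    (hmean : ∀ k i, ∫ ω, w k ω i ∂μ = 0)
    (hcov : ∀ k i j, ∫ ω, w k ω i * w k ω j ∂μ = W i j)
    (hwint : ∀ k i j, Integrable (fun ω => w k ω i * w k ω j) μ)
    (hindep : ∀ k, IndepFun (w k) (fun ω => (x k ω, u k ω)) μ)
    (hcostint : ∀ k, Integrable
      (fun ω => x k ω ⬝ᵥ Q.mulVec (x k ω) + u k ω ⬝ᵥ R.mulVec (u k ω)) μ) :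
    limsup (fun T : ℕ => (1 / (T : ℝ)) * ∑ k ∈ range T,
        ∫ ω, (x k ω ⬝ᵥ Q.mulVec (x k ω) + u k ω ⬝ᵥ R.mulVec (u k ω)) ∂μ) atTop ≤
      (8 * (1 + ρ0) * l2OpNorm B ^ 2 * l2OpNorm P0 / (1 - ρ0) ^ 2 + 2 * l2OpNorm R) * M ^ 2 +
        8 * (1 + ρ0) * (W * P0).trace / (1 - ρ0) ^ 2 := by
  classical
  have h1ρ : 0 < 1 - ρ0 := by linarith
  set Acl : Matrix (Fin n) (Fin n) ℝ := A + B * K0 with hAcldef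
  set d : ℕ → Ω → Fin m → ℝ := fun k ω => u k ω - K0.mulVec (x k ω) with hddef
  set y : ℕ → Ω → Fin n → ℝ := fun k ω => A.mulVec (x k ω) + B.mulVec (u k ω) with hydef
  have hP0psd : P0.PosSemidef := hP0.posSemidef
  have hP0sym : P0ᵀ = P0 := StmtAux.transpose_eq hP0psd.1
  -- bound on the control deviation
  have hdbound : ∀ k ω, d k ω ⬝ᵥ d k ω ≤ M ^ 2 := by
    intro k ω
    rcases hswitch k ω with h | h
    · have hg := hguard k ω h
      have hde : d k ω = (K1 - K0).mulVec (x k ω) := by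
        simp [hddef, h, Matrix.sub_mulVec]
      rw [hde]
      have hnn : 0 ≤ (K1 - K0).mulVec (x k ω) ⬝ᵥ (K1 - K0).mulVec (x k ω) :=
        StmtAux.dot_self_nonneg _
      nlinarith [Real.sq_sqrt hnn, Real.sqrt_nonneg
        ((K1 - K0).mulVec (x k ω) ⬝ᵥ (K1 - K0).mulVec (x k ω))]
    · have hde : d k ω = 0 := by simp [hddef, h]
      rw [hde]
      simp only [zero_dotProduct]
      positivity
  have hdabs : ∀ k ω i, |d k ω i| ≤ M := by
    intro k ω i
    have h1 : d k ω i * d k ω i ≤ d k ω ⬝ᵥ d k ω := by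
      have := Finset.single_le_sum (f := fun j => d k ω j * d k ω j)
        (fun j _ => mul_self_nonneg _) (Finset.mem_univ i)
      simpa [dotProduct] using this
    have h2 := hdbound k ω
    rw [abs_le]
    constructor <;> nlinarith
  -- component measurability
  have hxm : ∀ k (i : Fin n), Measurable fun ω => x k ω i :=
    fun k i => (measurable_pi_apply i).comp (hxmeas k)
  have hum : ∀ k (j : Fin m), Measurable fun ω => u k ω j :=
    fun k j => (measurable_pi_apply j).comp (humeas k)
  have hwm : ∀ k (i : Fin n), Measurable fun ω => w k ω i :=
    fun k i => (measurable_pi_apply i).comp (hwmeas k)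
  have hdm : ∀ k (j : Fin m), Measurable fun ω => d k ω j := by
    intro k j
    have heq : (fun ω => d k ω j) = fun ω => u k ω j - K0.mulVec (x k ω) j := by
      funext ω; rw [hddef]; rfl
    rw [heq]
    exact (hum k j).sub ((StmtAux.measurable_mulVec_apply K0 j).comp (hxmeas k))
  have hw2 : ∀ k (i : Fin n), MemLp (fun ω => w k ω i) 2 μ := by
    intro k i
    refine (memLp_two_iff_integrable_sq (hwm k i).aestronglyMeasurable).2 ?_
    simpa [sq] using hwint k i i
  have hd2 : ∀ k (j : Fin m), MemLp (fun ω => d k ω j) 2 μ :=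
    fun k j => StmtAux.memℒp2_of_bound (hdm k j) M (fun ω => hdabs k ω j)
  have hueq : ∀ k ω, u k ω = K0.mulVec (x k ω) + d k ω := by
    intro k ω; rw [hddef]; simp
  have hx2 : ∀ k (i : Fin n), MemLp (fun ω => x k ω i) 2 μ := by
    intro k
    induction k with
    | zero =>
      intro i
      have heq : (fun ω => x 0 ω i) = fun _ => (0 : ℝ) := by
        funext ω; rw [hx0]; rfl
      rw [heq]; exact memLp_const 0
    | succ k ih =>
      have hu2k : ∀ j, MemLp (fun ω => u k ω j) 2 μ := by
        intro j
        have heq : (fun ω => u k ω j) = fun ω => K0.mulVec (x k ω) j + d k ω j := by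
          funext ω; rw [hueq k ω]; rfl
        rw [heq]
        exact (StmtAux.memℒp2_mulVec K0 ih j).add (hd2 k j)
      intro i
      have heq : (fun ω => x (k+1) ω i) =
          fun ω => A.mulVec (x k ω) i + (B.mulVec (u k ω) i + w k ω i) := by
        funext ω; rw [hdyn k ω]; simp [Pi.add_apply]; ring
      rw [heq]
      exact (StmtAux.memℒp2_mulVec A ih i).add
        ((StmtAux.memℒp2_mulVec B hu2k i).add (hw2 k i))
  have hu2 : ∀ k (j : Fin m), MemLp (fun ω => u k ω j) 2 μ := by
    intro k j
    have heq : (fun ω => u k ω j) = fun ω => K0.mulVec (x k ω) j + d k ω j := by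
      funext ω; rw [hueq k ω]; rfl
    rw [heq]
    exact (StmtAux.memℒp2_mulVec K0 (hx2 k) j).add (hd2 k j)
  have hy2 : ∀ k (i : Fin n), MemLp (fun ω => y k ω i) 2 μ := by
    intro k i
    have heq : (fun ω => y k ω i) = fun ω => A.mulVec (x k ω) i + B.mulVec (u k ω) i := by
      funext ω; rw [hydef]; rfl
    rw [heq]
    exact (StmtAux.memℒp2_mulVec A (hx2 k) i).add (StmtAux.memℒp2_mulVec B (hu2 k) i)
  -- the Lyapunov function
  have hqxInt : ∀ k, Integrable (fun ω => x k ω ⬝ᵥ P0.mulVec (x k ω)) μ :=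
    fun k => (StmtAux.integrable_bilin P0 (hx2 k) (hx2 k)).1
  set V : ℕ → ℝ := fun k => ∫ ω, x k ω ⬝ᵥ P0.mulVec (x k ω) ∂μ with hVdef
  have hVapp : ∀ k, V k = ∫ ω, x k ω ⬝ᵥ P0.mulVec (x k ω) ∂μ := fun k => rfl
  set trW : ℝ := ∑ i, ∑ j, P0 i j * W i j with htrWdef
  have hqw : ∀ k, ∫ ω, w k ω ⬝ᵥ P0.mulVec (w k ω) ∂μ = trW := by
    intro k
    rw [(StmtAux.integrable_bilin P0 (hw2 k) (hw2 k)).2, htrWdef]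
    exact Finset.sum_congr rfl fun i _ => Finset.sum_congr rfl fun j _ => by rw [hcov k i j]
  have htrW_nonneg : 0 ≤ trW := by
    rw [← hqw 0]
    exact integral_nonneg fun ω => StmtAux.psd_quad_nonneg hP0psd _
  have htrW_trace : trW = (W * P0).trace := by
    rw [htrWdef]
    simp only [Matrix.trace, Matrix.diag, Matrix.mul_apply]
    refine Finset.sum_congr rfl fun i _ => Finset.sum_congr rfl fun j _ => ?_
    have hsymij : P0 j i = P0 i j := by
      have h := congrFun (congrFun hP0sym j) i
      simpa [Matrix.transpose_apply] using h.symm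
    rw [hsymij]; ring
  -- vanishing cross term
  have hcross : ∀ k, ∫ ω, y k ω ⬝ᵥ P0.mulVec (w k ω) ∂μ = 0 := by
    intro k
    rw [(StmtAux.integrable_bilin P0 (hy2 k) (hw2 k)).2]
    refine Finset.sum_eq_zero fun i _ => Finset.sum_eq_zero fun j _ => ?_
    have hφm : Measurable (fun p : (Fin n → ℝ) × (Fin m → ℝ) =>
        A.mulVec p.1 i + B.mulVec p.2 i) :=
      ((StmtAux.measurable_mulVec_apply A i).comp measurable_fst).add
        ((StmtAux.measurable_mulVec_apply B i).comp measurable_snd)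
    have hind : IndepFun (fun ω => w k ω j) (fun ω => y k ω i) μ := by
      have h := (hindep k).comp (measurable_pi_apply j) hφm
      have heq : ((fun p : (Fin n → ℝ) × (Fin m → ℝ) => A.mulVec p.1 i + B.mulVec p.2 i)
          ∘ (fun ω => (x k ω, u k ω))) = fun ω => y k ω i := by
        funext ω; rw [hydef]; rfl
      have heq2 : ((fun v : Fin n → ℝ => v j) ∘ w k) = fun ω => w k ω j := rfl
      rwa [heq, heq2] at h
    have h0 := hind.integral_fun_mul_eq_mul_integral (hwm k j).aestronglyMeasurable (hy2 k i).1
    rw [hmean k j, zero_mul] at h0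
    have heq3 : (fun ω => y k ω i * w k ω j) = fun ω => w k ω j * y k ω i := by
      funext ω; ring
    rw [heq3, h0, mul_zero]
  -- constants
  set r : ℝ := (1 + ρ0) / 2 with hrdef
  set κ : ℝ := (1 + ρ0) / (1 - ρ0) * (l2OpNorm B ^ 2 * l2OpNorm P0) with hκdef
  set c : ℝ := κ * M ^ 2 + trW with hcdef
  have hXnn : 0 ≤ l2OpNorm B ^ 2 * l2OpNorm P0 :=
    mul_nonneg (pow_nonneg (StmtAux.l2OpNorm_nonneg B) 2) (StmtAux.l2OpNorm_nonneg P0)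
  have hκ0 : 0 ≤ κ := by
    rw [hκdef]
    exact mul_nonneg (div_nonneg (by linarith) h1ρ.le) hXnn
  have hc0 : 0 ≤ c := by
    rw [hcdef]
    exact add_nonneg (mul_nonneg hκ0 (sq_nonneg M)) htrW_nonneg
  have hr0 : 0 ≤ r := by rw [hrdef]; linarith
  have hr1 : r < 1 := by rw [hrdef]; linarith
  -- pointwise decomposition of y
  have hyeq : ∀ k ω, y k ω = Acl.mulVec (x k ω) + B.mulVec (d k ω) := by
    intro k ω
    rw [hydef, hddef, hAcldef]
    simp only [Matrix.add_mulVec, Matrix.mulVec_sub, ← Matrix.mulVec_mulVec]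
    abel
  set ε : ℝ := (1 - ρ0) / (2 * ρ0) with hεdef
  have hε : 0 < ε := by rw [hεdef]; positivity
  have hqy_pt : ∀ k ω, y k ω ⬝ᵥ P0.mulVec (y k ω) ≤
      r * (x k ω ⬝ᵥ P0.mulVec (x k ω)) + κ * M ^ 2 := by
    intro k ω
    rw [hyeq k ω]
    have h1 := StmtAux.quad_add_le hP0psd (Acl.mulVec (x k ω)) (B.mulVec (d k ω)) hε
    have h2 : Acl.mulVec (x k ω) ⬝ᵥ P0.mulVec (Acl.mulVec (x k ω)) ≤
        ρ0 * (x k ω ⬝ᵥ P0.mulVec (x k ω)) := by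
      have h0 := StmtAux.psd_quad_nonneg hLyap (x k ω)
      rw [StmtAux.quad_transpose]
      have hexp : x k ω ⬝ᵥ (ρ0 • P0 - Aclᵀ * P0 * Acl).mulVec (x k ω)
          = ρ0 * (x k ω ⬝ᵥ P0.mulVec (x k ω)) -
            x k ω ⬝ᵥ (Aclᵀ * P0 * Acl).mulVec (x k ω) := by
        simp only [Matrix.sub_mulVec, Matrix.smul_mulVec, dotProduct_sub,
          dotProduct_smul, smul_eq_mul]
      rw [hexp] at h0
      linarith
    have h3 : B.mulVec (d k ω) ⬝ᵥ P0.mulVec (B.mulVec (d k ω)) ≤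
        l2OpNorm P0 * (l2OpNorm B ^ 2 * M ^ 2) := by
      calc B.mulVec (d k ω) ⬝ᵥ P0.mulVec (B.mulVec (d k ω))
          ≤ l2OpNorm P0 * (B.mulVec (d k ω) ⬝ᵥ B.mulVec (d k ω)) :=
            StmtAux.quad_le_opNorm _ _
        _ ≤ l2OpNorm P0 * (l2OpNorm B ^ 2 * (d k ω ⬝ᵥ d k ω)) :=
            mul_le_mul_of_nonneg_left (StmtAux.dot_mulVec_self_le _ _)
              (StmtAux.l2OpNorm_nonneg _)
        _ ≤ l2OpNorm P0 * (l2OpNorm B ^ 2 * M ^ 2) := by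
            refine mul_le_mul_of_nonneg_left ?_ (StmtAux.l2OpNorm_nonneg _)
            exact mul_le_mul_of_nonneg_left (hdbound k ω)
              (pow_nonneg (StmtAux.l2OpNorm_nonneg B) 2)
    have hq1 : (0:ℝ) ≤ 1 + ε := by linarith
    have hq2 : (0:ℝ) ≤ 1 + ε⁻¹ := by
      linarith [inv_pos.2 hε]
    have hρ0' : ρ0 ≠ 0 := ne_of_gt hρ0
    have h1ρ' : (1:ℝ) - ρ0 ≠ 0 := ne_of_gt h1ρ
    calc (Acl.mulVec (x k ω) + B.mulVec (d k ω)) ⬝ᵥ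
          P0.mulVec (Acl.mulVec (x k ω) + B.mulVec (d k ω))
        ≤ (1 + ε) * (Acl.mulVec (x k ω) ⬝ᵥ P0.mulVec (Acl.mulVec (x k ω))) +
            (1 + ε⁻¹) * (B.mulVec (d k ω) ⬝ᵥ P0.mulVec (B.mulVec (d k ω))) := h1
      _ ≤ (1 + ε) * (ρ0 * (x k ω ⬝ᵥ P0.mulVec (x k ω))) +
            (1 + ε⁻¹) * (l2OpNorm P0 * (l2OpNorm B ^ 2 * M ^ 2)) :=
          add_le_add (mul_le_mul_of_nonneg_left h2 hq1) (mul_le_mul_of_nonneg_left h3 hq2)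
      _ = r * (x k ω ⬝ᵥ P0.mulVec (x k ω)) + κ * M ^ 2 := by
          rw [hrdef, hκdef, hεdef]
          have hρ0'' : ρ0 ≠ 0 := ne_of_gt hρ0
          field_simp
          ring
  -- one-step recursion for V
  have hstep : ∀ k, V (k + 1) ≤ r * V k + c := by
    intro k
    have hxsucc : ∀ ω, x (k + 1) ω = y k ω + w k ω := by
      intro ω; rw [hdyn k ω, hydef]
    have hqsplit : ∀ ω, x (k + 1) ω ⬝ᵥ P0.mulVec (x (k + 1) ω)
        = y k ω ⬝ᵥ P0.mulVec (y k ω) + 2 * (y k ω ⬝ᵥ P0.mulVec (w k ω)) +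
          w k ω ⬝ᵥ P0.mulVec (w k ω) := by
      intro ω
      rw [hxsucc ω]
      have hcomm := StmtAux.dot_mulVec_symm hP0sym (w k ω) (y k ω)
      simp only [Matrix.mulVec_add, dotProduct_add, add_dotProduct, hcomm]
      ring
    have hIy := (StmtAux.integrable_bilin P0 (hy2 k) (hy2 k)).1
    have hIcr := (StmtAux.integrable_bilin P0 (hy2 k) (hw2 k)).1
    have hIw := (StmtAux.integrable_bilin P0 (hw2 k) (hw2 k)).1
    have hVsplit : V (k + 1) = (∫ ω, y k ω ⬝ᵥ P0.mulVec (y k ω) ∂μ) +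
        2 * (∫ ω, y k ω ⬝ᵥ P0.mulVec (w k ω) ∂μ) +
        ∫ ω, w k ω ⬝ᵥ P0.mulVec (w k ω) ∂μ := by
      have hIcr2 : Integrable (fun ω => 2 * (y k ω ⬝ᵥ P0.mulVec (w k ω))) μ :=
        hIcr.const_mul 2
      have hsum12 : Integrable (fun ω => y k ω ⬝ᵥ P0.mulVec (y k ω) +
          2 * (y k ω ⬝ᵥ P0.mulVec (w k ω))) μ := hIy.add hIcr2
      rw [hVapp]
      rw [integral_congr_ae (Filter.Eventually.of_forall hqsplit)]
      rw [integral_add hsum12 hIw, integral_add hIy hIcr2, integral_const_mul]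
    rw [hVsplit, hcross k, hqw k]
    have h4 : (∫ ω, y k ω ⬝ᵥ P0.mulVec (y k ω) ∂μ) ≤ r * V k + κ * M ^ 2 := by
      have hmaj : Integrable
          (fun ω => r * (x k ω ⬝ᵥ P0.mulVec (x k ω)) + κ * M ^ 2) μ :=
        ((hqxInt k).const_mul r).add (integrable_const _)
      calc (∫ ω, y k ω ⬝ᵥ P0.mulVec (y k ω) ∂μ)
          ≤ ∫ ω, (r * (x k ω ⬝ᵥ P0.mulVec (x k ω)) + κ * M ^ 2) ∂μ :=
            integral_mono hIy hmaj (hqy_pt k)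
        _ = r * V k + κ * M ^ 2 := by
            rw [integral_add ((hqxInt k).const_mul r) (integrable_const _),
              integral_const_mul, integral_const, probReal_univ,
              smul_eq_mul, one_mul, hVapp k]
    rw [hcdef]
    linarith
  -- uniform bound on V
  have hV0 : V 0 = 0 := by
    rw [hVapp 0]
    have heq : ∀ ω, x 0 ω ⬝ᵥ P0.mulVec (x 0 ω) = 0 := by
      intro ω; rw [hx0]; simp
    rw [integral_congr_ae (Filter.Eventually.of_forall heq)]
    simp
  set S : ℝ := c / (1 - r) with hSdef
  have hS0 : 0 ≤ S := div_nonneg hc0 (by linarith)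
  have hVle : ∀ k, V k ≤ S := by
    intro k
    induction k with
    | zero => rw [hV0]; exact hS0
    | succ k ih =>
      have hs := hstep k
      have hfix : r * S + c = S := by
        have h1rpos : (0:ℝ) < 1 - r := by linarith
        rw [hSdef]
        field_simp [h1rpos.ne']
        ring
      have hmono : r * V k ≤ r * S := mul_le_mul_of_nonneg_left ih hr0
      linarith
  -- per-step cost bound
  have hmat : Q + K0ᵀ * R * K0 = P0 - Aclᵀ * P0 * Acl := by
    rw [← sub_eq_zero, ← hLyapEq]
    abel
  have hcost_pt : ∀ k ω, x k ω ⬝ᵥ Q.mulVec (x k ω) + u k ω ⬝ᵥ R.mulVec (u k ω) ≤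
      2 * (x k ω ⬝ᵥ P0.mulVec (x k ω)) + 2 * l2OpNorm R * M ^ 2 := by
    intro k ω
    have hQpart : x k ω ⬝ᵥ Q.mulVec (x k ω) + x k ω ⬝ᵥ (K0ᵀ * R * K0).mulVec (x k ω)
        ≤ x k ω ⬝ᵥ P0.mulVec (x k ω) := by
      have h0 : 0 ≤ Acl.mulVec (x k ω) ⬝ᵥ P0.mulVec (Acl.mulVec (x k ω)) :=
        StmtAux.psd_quad_nonneg hP0psd _
      rw [StmtAux.quad_transpose] at h0
      have hdot := congrArg (fun Mx : Matrix (Fin n) (Fin n) ℝ =>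
        x k ω ⬝ᵥ Mx.mulVec (x k ω)) hmat
      simp only [Matrix.add_mulVec, Matrix.sub_mulVec, dotProduct_add, dotProduct_sub] at hdot
      linarith
    have h3 : K0.mulVec (x k ω) ⬝ᵥ R.mulVec (K0.mulVec (x k ω)) =
        x k ω ⬝ᵥ (K0ᵀ * R * K0).mulVec (x k ω) := StmtAux.quad_transpose _ _ _
    have h2 : d k ω ⬝ᵥ R.mulVec (d k ω) ≤ l2OpNorm R * M ^ 2 := by
      calc d k ω ⬝ᵥ R.mulVec (d k ω) ≤ l2OpNorm R * (d k ω ⬝ᵥ d k ω) :=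
            StmtAux.quad_le_opNorm _ _
        _ ≤ l2OpNorm R * M ^ 2 :=
            mul_le_mul_of_nonneg_left (hdbound k ω) (StmtAux.l2OpNorm_nonneg _)
    have h1 : u k ω ⬝ᵥ R.mulVec (u k ω) ≤
        (1 + 1) * (K0.mulVec (x k ω) ⬝ᵥ R.mulVec (K0.mulVec (x k ω))) +
        (1 + (1:ℝ)⁻¹) * (d k ω ⬝ᵥ R.mulVec (d k ω)) := by
      have := StmtAux.quad_add_le hR.posSemidef (K0.mulVec (x k ω)) (d k ω) one_pos
      rwa [← hueq k ω] at this
    have hQnn : 0 ≤ x k ω ⬝ᵥ Q.mulVec (x k ω) := StmtAux.psd_quad_nonneg hQ.posSemidef _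
    have hKnn : 0 ≤ K0.mulVec (x k ω) ⬝ᵥ R.mulVec (K0.mulVec (x k ω)) :=
      StmtAux.psd_quad_nonneg hR.posSemidef _
    rw [h3] at h1
    linarith
  set Bd : ℝ := 2 * S + 2 * l2OpNorm R * M ^ 2 with hBddef
  have hIcost : ∀ k, (∫ ω, (x k ω ⬝ᵥ Q.mulVec (x k ω) + u k ω ⬝ᵥ R.mulVec (u k ω)) ∂μ) ≤ Bd := by
    intro k
    have hmaj : Integrable
        (fun ω => 2 * (x k ω ⬝ᵥ P0.mulVec (x k ω)) + 2 * l2OpNorm R * M ^ 2) μ :=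
      ((hqxInt k).const_mul 2).add (integrable_const _)
    calc (∫ ω, (x k ω ⬝ᵥ Q.mulVec (x k ω) + u k ω ⬝ᵥ R.mulVec (u k ω)) ∂μ)
        ≤ ∫ ω, (2 * (x k ω ⬝ᵥ P0.mulVec (x k ω)) + 2 * l2OpNorm R * M ^ 2) ∂μ :=
          integral_mono (hcostint k) hmaj (hcost_pt k)
      _ = 2 * V k + 2 * l2OpNorm R * M ^ 2 := by
          rw [integral_add ((hqxInt k).const_mul 2) (integrable_const _),
            integral_const_mul, integral_const, probReal_univ,
            smul_eq_mul, one_mul, hVapp k]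
      _ ≤ Bd := by
          rw [hBddef]
          have := hVle k
          linarith
  have hcostnn : ∀ k, 0 ≤ ∫ ω, (x k ω ⬝ᵥ Q.mulVec (x k ω) + u k ω ⬝ᵥ R.mulVec (u k ω)) ∂μ :=
    fun k => integral_nonneg fun ω => add_nonneg
      (StmtAux.psd_quad_nonneg hQ.posSemidef _) (StmtAux.psd_quad_nonneg hR.posSemidef _)
  have hBd0 : 0 ≤ Bd := le_trans (hcostnn 0) (hIcost 0)
  have havg : ∀ T : ℕ, (1 / (T : ℝ)) * ∑ k ∈ range T,
      ∫ ω, (x k ω ⬝ᵥ Q.mulVec (x k ω) + u k ω ⬝ᵥ R.mulVec (u k ω)) ∂μ ≤ Bd := by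
    intro T
    rcases Nat.eq_zero_or_pos T with hT | hT
    · subst hT; simpa using hBd0
    · have hTpos : (0:ℝ) < T := by exact_mod_cast hT
      have hsum : ∑ k ∈ range T,
          (∫ ω, (x k ω ⬝ᵥ Q.mulVec (x k ω) + u k ω ⬝ᵥ R.mulVec (u k ω)) ∂μ) ≤ T * Bd := by
        calc ∑ k ∈ range T,
            (∫ ω, (x k ω ⬝ᵥ Q.mulVec (x k ω) + u k ω ⬝ᵥ R.mulVec (u k ω)) ∂μ)
            ≤ ∑ _k ∈ range T, Bd := Finset.sum_le_sum fun k _ => hIcost k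
          _ = T * Bd := by simp [Finset.sum_const, Finset.card_range, nsmul_eq_mul]
      calc (1 / (T : ℝ)) * ∑ k ∈ range T,
          ∫ ω, (x k ω ⬝ᵥ Q.mulVec (x k ω) + u k ω ⬝ᵥ R.mulVec (u k ω)) ∂μ
          ≤ (1 / (T : ℝ)) * ((T : ℝ) * Bd) :=
            mul_le_mul_of_nonneg_left hsum (by positivity)
        _ = Bd := by field_simp
  have hlimsup : limsup (fun T : ℕ => (1 / (T : ℝ)) * ∑ k ∈ range T,
      ∫ ω, (x k ω ⬝ᵥ Q.mulVec (x k ω) + u k ω ⬝ᵥ R.mulVec (u k ω)) ∂μ) atTop ≤ Bd := by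
    have hnn : ∀ T : ℕ, (0:ℝ) ≤ (1 / (T : ℝ)) * ∑ k ∈ range T,
        ∫ ω, (x k ω ⬝ᵥ Q.mulVec (x k ω) + u k ω ⬝ᵥ R.mulVec (u k ω)) ∂μ := by
      intro T
      exact mul_nonneg (by positivity) (Finset.sum_nonneg fun k _ => hcostnn k)
    have hb : IsBoundedUnder (· ≥ ·) atTop (fun T : ℕ => (1 / (T : ℝ)) * ∑ k ∈ range T,
        ∫ ω, (x k ω ⬝ᵥ Q.mulVec (x k ω) + u k ω ⬝ᵥ R.mulVec (u k ω)) ∂μ) :=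
      ⟨0, Filter.eventually_map.2 (Filter.Eventually.of_forall hnn)⟩
    exact Filter.limsup_le_of_le hb.isCoboundedUnder_le
      (Filter.Eventually.of_forall havg)
  refine hlimsup.trans ?_
  rw [← htrW_trace, hBddef, hSdef, hcdef, hκdef, hrdef]
  have h1ρ' : (1:ℝ) - ρ0 ≠ 0 := ne_of_gt h1ρ
  have hdiff : (8 * (1 + ρ0) * l2OpNorm B ^ 2 * l2OpNorm P0 / (1 - ρ0) ^ 2 +
        2 * l2OpNorm R) * M ^ 2 + 8 * (1 + ρ0) * trW / (1 - ρ0) ^ 2 -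
      (2 * (((1 + ρ0) / (1 - ρ0) * (l2OpNorm B ^ 2 * l2OpNorm P0) * M ^ 2 + trW) /
        (1 - (1 + ρ0) / 2)) + 2 * l2OpNorm R * M ^ 2)
      = 4 * (1 + ρ0) * (l2OpNorm B ^ 2 * l2OpNorm P0) * M ^ 2 / (1 - ρ0) ^ 2 +
        (4 + 12 * ρ0) * trW / (1 - ρ0) ^ 2 := by
    have hhalf : (1:ℝ) - (1 + ρ0) / 2 = (1 - ρ0) / 2 := by ring
    rw [hhalf]
    rw [div_div_eq_mul_div]
    field_simp [h1ρ']
    ring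
  have hpos1 : 0 ≤ 4 * (1 + ρ0) * (l2OpNorm B ^ 2 * l2OpNorm P0) * M ^ 2 / (1 - ρ0) ^ 2 := by
    apply div_nonneg _ (sq_nonneg _)
    exact mul_nonneg (mul_nonneg (by linarith : (0:ℝ) ≤ 4 * (1 + ρ0)) hXnn) (sq_nonneg M)
  have hpos2 : 0 ≤ (4 + 12 * ρ0) * trW / (1 - ρ0) ^ 2 := by
    apply div_nonneg _ (sq_nonneg _)
    apply mul_nonneg (by linarith) htrW_nonneg
  linarith
end
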